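/- arXiv:1903.08569 — 9 statements merged into one kernel-verified Lean document; each statement's English description precedes it below -/
import Mathlib

section
/- Let Γ⃗ = (V,E,s,t) be a finite directed graph that is acyclic, i.e., there is no edge e ∈ E such that s e is reachable from t e under the reflexive-transitive closure of the step relation (v steps to w iff there is an edge e' with s e' = v and t e' = w). Let D : V → ℤ be a divisor of degree 0 (∑_v D v = 0). Then the set of flows φ : E → ℕ with div φ = D is finite, where div φ (v) := ∑_{e : t e = v} φ e − ∑_{e : s e = v} φ e. -/
noncomputable section

/-- The "step" relation of a digraph `(V, E, s, t)`: `a` steps to `b`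
if there is an edge with source `a` and target `b`. -/
def GraphStep {V E : Type} (s t : E → V) (a b : V) : Prop := ∃ e, s e = a ∧ t e = b

/-- A digraph is acyclic if no edge `e` is such that its source is reachable from its
target under the reflexive-transitive closure of the step relation. -/
def DigraphAcyclic {V E : Type} (s t : E → V) : Prop :=
  ¬ ∃ e : E, Relation.ReflTransGen (GraphStep s t) (t e) (s e)

/-- The divisor of a flow `φ : E → ℕ` on a digraph:
`div φ (v) = ∑_{e : t e = v} φ e − ∑_{e : s e = v} φ e`. -/
def divFlow {V E : Type} (s t : E → V) (φ : E → ℕ) (v : V) : ℤ :=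
  (∑ᶠ e ∈ {e : E | t e = v}, (φ e : ℤ)) - ∑ᶠ e ∈ {e : E | s e = v}, (φ e : ℤ)

/-- Proposition 2.2 (Prop. `prop:flow`): on a finite acyclic digraph, for any divisor `D`
of degree `0`, the set of flows `φ` with `div φ = D` is finite. -/
theorem finitely_many_flows (V E : Type) [Fintype V] [Fintype E] (s t : E → V)
    (hacyclic : DigraphAcyclic s t) (D : V → ℤ) (hdeg : (∑ᶠ v, D v) = 0) :
    {φ : E → ℕ | divFlow s t φ = D}.Finite := by
  classical
  set N : ℕ := (∑ v, |D v|).toNat with hN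
  have habs : (0:ℤ) ≤ ∑ v, |D v| := Finset.sum_nonneg fun v _ => abs_nonneg _
  have hNcast : (N : ℤ) = ∑ v, |D v| := Int.toNat_of_nonneg habs
  have hdiv : ∀ (φ : E → ℕ) (v : V), divFlow s t φ v =
      (∑ e ∈ Finset.univ.filter (fun e => t e = v), (φ e : ℤ)) -
        ∑ e ∈ Finset.univ.filter (fun e => s e = v), (φ e : ℤ) := by
    intro φ v
    unfold divFlow
    rw [show {e : E | t e = v} = ↑(Finset.univ.filter fun e => t e = v) by ext; simp,
      show {e : E | s e = v} = ↑(Finset.univ.filter fun e => s e = v) by ext; simp,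
      finsum_mem_coe_finset, finsum_mem_coe_finset]
  have key : ∀ φ ∈ {φ : E → ℕ | divFlow s t φ = D}, ∀ e, φ e ≤ N := by
    intro φ hφ e
    set S : Set V := {v | Relation.ReflTransGen (GraphStep s t) v (s e)} with hS
    have hSclosed : ∀ e', t e' ∈ S → s e' ∈ S :=
      fun e' h => Relation.ReflTransGen.head ⟨e', rfl, rfl⟩ h
    have hse : s e ∈ S := Relation.ReflTransGen.refl
    have hte : t e ∉ S := fun h => hacyclic ⟨e, h⟩
    set SF : Finset V := Finset.univ.filter (· ∈ S) with hSF
    have hDv : ∀ v, D v =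
        (∑ e' ∈ Finset.univ.filter (fun e' => t e' = v), (φ e' : ℤ)) -
          ∑ e' ∈ Finset.univ.filter (fun e' => s e' = v), (φ e' : ℤ) := by
      intro v; rw [← hφ]; exact hdiv φ v
    have hsum : ∑ v ∈ SF, D v =
        (∑ e' ∈ Finset.univ.filter (fun e' => t e' ∈ S), (φ e' : ℤ)) -
          ∑ e' ∈ Finset.univ.filter (fun e' => s e' ∈ S), (φ e' : ℤ) := by
      have h1 := Finset.sum_fiberwise_eq_sum_filter Finset.univ SF t (fun e' => (φ e' : ℤ))
      have h2 := Finset.sum_fiberwise_eq_sum_filter Finset.univ SF s (fun e' => (φ e' : ℤ))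
      have hmemt : Finset.univ.filter (fun e' => t e' ∈ SF) =
          Finset.univ.filter (fun e' => t e' ∈ S) := by
        ext e'; simp [hSF]
      have hmems : Finset.univ.filter (fun e' => s e' ∈ SF) =
          Finset.univ.filter (fun e' => s e' ∈ S) := by
        ext e'; simp [hSF]
      rw [hmemt] at h1; rw [hmems] at h2
      calc ∑ v ∈ SF, D v
          = (∑ v ∈ SF, ∑ e' ∈ Finset.univ.filter (fun e' => t e' = v), (φ e' : ℤ)) -
            ∑ v ∈ SF, ∑ e' ∈ Finset.univ.filter (fun e' => s e' = v), (φ e' : ℤ) := by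
            rw [← Finset.sum_sub_distrib]; exact Finset.sum_congr rfl fun v _ => hDv v
        _ = _ := by rw [h1, h2]
    -- split the source sum
    have hsplit := Finset.sum_filter_add_sum_filter_not
      (Finset.univ.filter (fun e' => s e' ∈ S)) (fun e' => t e' ∈ S) (fun e' => (φ e' : ℤ))
    have hteq : (Finset.univ.filter (fun e' => s e' ∈ S)).filter (fun e' => t e' ∈ S) =
        Finset.univ.filter (fun e' => t e' ∈ S) := by
      ext e'; simp only [Finset.mem_filter, Finset.mem_univ, true_and]
      exact ⟨fun h => h.2, fun h => ⟨hSclosed e' h, h⟩⟩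
    have hcut : ∑ v ∈ SF, D v =
        -(∑ e' ∈ (Finset.univ.filter (fun e' => s e' ∈ S)).filter
            (fun e' => ¬ t e' ∈ S), (φ e' : ℤ)) := by
      rw [hsum, ← hsplit, hteq]; ring
    have hmem : e ∈ (Finset.univ.filter (fun e' => s e' ∈ S)).filter
        (fun e' => ¬ t e' ∈ S) := by
      simp only [Finset.mem_filter, Finset.mem_univ, true_and]; exact ⟨hse, hte⟩
    have hle : (φ e : ℤ) ≤ ∑ e' ∈ (Finset.univ.filter (fun e' => s e' ∈ S)).filter
        (fun e' => ¬ t e' ∈ S), (φ e' : ℤ) :=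
      Finset.single_le_sum (f := fun e' => (φ e' : ℤ)) (fun e' _ => by positivity) hmem
    have hboundD : -(∑ v ∈ SF, D v) ≤ ∑ v, |D v| := by
      calc -(∑ v ∈ SF, D v) = ∑ v ∈ SF, -(D v) := by rw [Finset.sum_neg_distrib]
        _ ≤ ∑ v ∈ SF, |D v| := Finset.sum_le_sum fun v _ => neg_le_abs _
        _ ≤ ∑ v, |D v| := Finset.sum_le_sum_of_subset_of_nonneg
            (Finset.filter_subset _ _) fun v _ _ => abs_nonneg _
    have : (φ e : ℤ) ≤ (N : ℤ) := by
      rw [hNcast]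
      calc (φ e : ℤ) ≤ _ := hle
        _ = -(∑ v ∈ SF, D v) := by rw [hcut, neg_neg]
        _ ≤ ∑ v, |D v| := hboundD
    exact_mod_cast this
  have hfin : (Set.pi Set.univ (fun _ : E => Set.Iic N)).Finite :=
    Set.Finite.pi fun _ => Set.finite_Iic N
  refine hfin.subset fun φ hφ => ?_
  simp only [Set.mem_pi, Set.mem_univ, Set.mem_Iic, forall_true_left]
  exact fun e => key φ hφ e

end
end

section
/- Let Γ = (V,E,s,t) be a finite connected multigraph. A function D : V → ℤ lies in the range of the map d* : (E → ℤ) → (V → ℤ) defined by d* z (v) := ∑_{e : t e = v} z e − ∑_{e : s e = v} z e if and only if ∑_{v ∈ V} D v = 0. (That is, the image of d* consists precisely of the divisors of degree 0 on Γ.) -/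
noncomputable section

/-- `b₀`: the number of connected components. -/
def b0 {V E : Type} (s t : E → V) : ℕ := Nat.card (Quot (GraphStep s t))

/-- A multigraph is connected if its vertex set is nonempty and it has exactly one
connected component. -/
def GraphConnected {V E : Type} (s t : E → V) : Prop := Nonempty V ∧ b0 s t = 1

/-- The boundary map `d* : (E → ℤ) → (V → ℤ)`,
`d* z (v) = ∑_{e : t e = v} z e − ∑_{e : s e = v} z e`. -/
def dstar {V E : Type} (s t : E → V) (z : E → ℤ) (v : V) : ℤ :=
  (∑ᶠ e ∈ {e : E | t e = v}, z e) - ∑ᶠ e ∈ {e : E | s e = v}, z e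

lemma dstar_apply {V E : Type} [Fintype E] [DecidableEq V] (s t : E → V) (z : E → ℤ) (v : V) :
    dstar s t z v = (∑ e ∈ Finset.univ.filter fun e => t e = v, z e)
      - ∑ e ∈ Finset.univ.filter fun e => s e = v, z e := by
  unfold dstar
  have h1 : {e : E | t e = v} = ↑(Finset.univ.filter fun e => t e = v) := by ext e; simp
  have h2 : {e : E | s e = v} = ↑(Finset.univ.filter fun e => s e = v) := by ext e; simp
  rw [h1, h2, finsum_mem_coe_finset, finsum_mem_coe_finset]

/-- For a finite connected multigraph, a divisor `D : V → ℤ` lies in the image of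
`d*` if and only if it has degree `0`. -/
theorem dstar_range_iff_degree_zero (V E : Type) [Fintype V] [Fintype E] (s t : E → V)
    (hconn : GraphConnected s t) (D : V → ℤ) :
    (∃ z : E → ℤ, dstar s t z = D) ↔ (∑ᶠ v, D v) = 0 := by
  classical
  constructor
  · rintro ⟨z, rfl⟩
    rw [finsum_eq_sum_of_fintype]
    simp only [dstar_apply, Finset.sum_sub_distrib]
    rw [Finset.sum_fiberwise_of_maps_to (fun e _ => Finset.mem_univ (t e)) z,
        Finset.sum_fiberwise_of_maps_to (fun e _ => Finset.mem_univ (s e)) z, sub_self]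
  · intro hD
    obtain ⟨⟨v0⟩, hb⟩ := hconn
    set M : AddSubgroup (V → ℤ) :=
      { carrier := Set.range (dstar s t)
        zero_mem' := ⟨0, by ext v; simp [dstar_apply]⟩
        add_mem' := by
          rintro _ _ ⟨z1, rfl⟩ ⟨z2, rfl⟩
          exact ⟨z1 + z2, by ext v; simp [dstar_apply, Finset.sum_add_distrib]; ring⟩
        neg_mem' := by
          rintro _ ⟨z, rfl⟩
          exact ⟨-z, by ext v; simp [dstar_apply, Finset.sum_neg_distrib]; ring⟩ } with hM
    -- the single-edge chains
    have hedge : ∀ e : E, (Pi.single (t e) 1 - Pi.single (s e) 1 : V → ℤ) ∈ M := by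
      intro e
      refine ⟨Pi.single e 1, ?_⟩
      ext v
      simp [dstar_apply, Pi.single_apply, Finset.sum_ite_eq', eq_comm]
    -- all vertices map to the same class mod M
    haveI hsub : Subsingleton (Quot (GraphStep s t)) := by
      have := Nat.card_eq_one_iff_unique.mp hb
      exact this.1
    have key : ∀ a : V, (Pi.single a 1 - Pi.single v0 1 : V → ℤ) ∈ M := by
      have hq : ∀ a b : V, GraphStep s t a b →
          (QuotientAddGroup.mk (Pi.single a 1) : (V → ℤ) ⧸ M)
            = QuotientAddGroup.mk (Pi.single b 1) := by
        rintro a b ⟨e, he1, he2⟩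
        rw [QuotientAddGroup.eq_iff_sub_mem]
        subst he1; subst he2
        have := M.neg_mem (hedge e)
        rwa [neg_sub] at this
      let Q : Quot (GraphStep s t) → (V → ℤ) ⧸ M := Quot.lift
        (fun v => QuotientAddGroup.mk (Pi.single v 1)) hq
      intro a
      have helim : Quot.mk (GraphStep s t) a = Quot.mk (GraphStep s t) v0 :=
        Subsingleton.elim _ _
      have : Q (Quot.mk _ a) = Q (Quot.mk _ v0) := congrArg Q helim
      rw [← QuotientAddGroup.eq_iff_sub_mem]
      exact this
    -- decompose D
    have hDdec : D = ∑ v : V, D v • (Pi.single v 1 - Pi.single v0 1 : V → ℤ) := by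
      have h2 : ∀ v : V, Pi.single v (D v) = D v • (Pi.single v 1 : V → ℤ) := by
        intro v; ext w; by_cases h : w = v <;> simp [Pi.single_apply, h]
      have h3 : (∑ v : V, D v) = 0 := by rwa [finsum_eq_sum_of_fintype] at hD
      calc D = ∑ v : V, Pi.single v (D v) := (Finset.univ_sum_single D).symm
        _ = ∑ v : V, D v • (Pi.single v 1 : V → ℤ) :=
            Finset.sum_congr rfl fun v _ => h2 v
        _ = ∑ v : V, D v • (Pi.single v 1 - Pi.single v0 1 : V → ℤ) := by
            simp only [smul_sub, Finset.sum_sub_distrib, ← Finset.sum_smul, h3,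
              zero_smul, sub_zero]
    have : D ∈ M := by
      rw [hDdec]
      exact M.sum_mem fun v _ => M.zsmul_mem (key v) _
    exact this

end
end

section
/- Let Γ = (V,E,s,t) be a finite connected multigraph, v₀ ∈ V, μ : V → ℝ a polarization, and 𝓔 ⊆ E. Let D be a divisor on the subdivision Γ^𝓔 (i.e., D : V ⊕ 𝓔 → ℤ) with ∑ D = ∑_v μ v. If D is (v₀, μ^𝓔)-quasistable on Γ^𝓔 (with v₀ viewed as a vertex of Γ^𝓔), then D(w) ∈ {0, −1} for every exceptional vertex w ∈ 𝓔. -/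
noncomputable section

/-- Vertex type of the subdivision `Γ^𝓔`: the old vertices plus one exceptional
vertex for each edge of `𝓔`. -/
abbrev SubV (V : Type) {E : Type} (𝓔 : Finset E) : Type := V ⊕ {e // e ∈ 𝓔}

/-- Edge type of the subdivision `Γ^𝓔`: the edges not in `𝓔`, plus two halves
for each edge of `𝓔`. -/
abbrev SubE {E : Type} (𝓔 : Finset E) : Type := {e // e ∉ 𝓔} ⊕ ({e // e ∈ 𝓔} × Bool)

/-- Source map of the subdivision. -/
def subS {V E : Type} (s t : E → V) (𝓔 : Finset E) : SubE 𝓔 → SubV V 𝓔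
  | .inl e => .inl (s e.1)
  | .inr (e, false) => .inl (s e.1)
  | .inr (e, true) => .inr e

/-- Target map of the subdivision. -/
def subT {V E : Type} (s t : E → V) (𝓔 : Finset E) : SubE 𝓔 → SubV V 𝓔
  | .inl e => .inl (t e.1)
  | .inr (e, false) => .inr e
  | .inr (e, true) => .inl (t e.1)

/-- `δ_W`: the number of edges with exactly one endpoint in `W`. -/
def edgeDelta {V E : Type} (s t : E → V) (W : Set V) : ℕ :=
  Nat.card {e : E // (s e ∈ W ∧ t e ∉ W) ∨ (s e ∉ W ∧ t e ∈ W)}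

/-- `β_D(W) := ∑_{v ∈ W} D v − ∑_{v ∈ W} μ v + δ_W / 2`. -/
def betaDiv {V E : Type} (s t : E → V) (D : V → ℤ) (μ : V → ℝ) (W : Set V) : ℝ :=
  (∑ᶠ v ∈ W, (D v : ℝ)) - (∑ᶠ v ∈ W, μ v) + (edgeDelta s t W : ℝ) / 2

/-- `(v₀,μ)`-quasistability. -/
def Quasistable {V E : Type} (s t : E → V) (v₀ : V) (D : V → ℤ) (μ : V → ℝ) : Prop :=
  ∀ W : Set V, W ≠ Set.univ →
    0 ≤ betaDiv s t D μ W ∧ (v₀ ∈ W → 0 < betaDiv s t D μ W)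

/-- If a divisor `D` on the subdivision `Γ^𝓔` of a finite connected multigraph is
`(v₀, μ^𝓔)`-quasistable, then `D(w) ∈ {0, −1}` for every exceptional vertex `w`. -/
theorem exceptional_values (V E : Type) [Fintype V] [Fintype E] (s t : E → V)
    (hconn : GraphConnected s t) (v₀ : V) (μ : V → ℝ) (𝓔 : Finset E)
    (D : SubV V 𝓔 → ℤ)
    (hdeg : (∑ᶠ w, (D w : ℝ)) = ∑ᶠ v, μ v)
    (hqs : Quasistable (subS s t 𝓔) (subT s t 𝓔) (Sum.inl v₀) D (Sum.elim μ fun _ => 0)) :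
    ∀ w : {e // e ∈ 𝓔}, D (Sum.inr w) = 0 ∨ D (Sum.inr w) = -1 := by
  classical
  intro w
  set a : SubV V 𝓔 := Sum.inr w with ha
  set W : Set (SubV V 𝓔) := {a} with hW
  -- δ of the singleton is 2
  have hδ : edgeDelta (subS s t 𝓔) (subT s t 𝓔) W = 2 := by
    have hset : {x : SubE 𝓔 | (subS s t 𝓔 x ∈ W ∧ subT s t 𝓔 x ∉ W) ∨
        (subS s t 𝓔 x ∉ W ∧ subT s t 𝓔 x ∈ W)}
        = {Sum.inr (w, false), Sum.inr (w, true)} := by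
      ext x
      rcases x with e | ⟨e, b⟩
      · simp [subS, subT, hW, ha]
      · cases b <;> simp [subS, subT, hW, ha, eq_comm]
    rw [edgeDelta, show {e : SubE 𝓔 // (subS s t 𝓔 e ∈ W ∧ subT s t 𝓔 e ∉ W) ∨
        (subS s t 𝓔 e ∉ W ∧ subT s t 𝓔 e ∈ W)} = ↥{x : SubE 𝓔 |
        (subS s t 𝓔 x ∈ W ∧ subT s t 𝓔 x ∉ W) ∨
        (subS s t 𝓔 x ∉ W ∧ subT s t 𝓔 x ∈ W)} from rfl,
      Nat.card_coe_set_eq, hset, Set.ncard_pair (by simp)]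
  -- δ of the complement equals δ of the set
  have hδc : edgeDelta (subS s t 𝓔) (subT s t 𝓔) Wᶜ = 2 := by
    rw [← hδ, edgeDelta, edgeDelta]
    exact Nat.card_congr (Equiv.subtypeEquivRight (fun x => by
      simp only [Set.mem_compl_iff, not_not]; tauto))
  -- total sum of the extended polarization
  have hμtot : (∑ᶠ v : SubV V 𝓔, Sum.elim μ (fun _ => 0) v) = ∑ᶠ v : V, μ v := by
    rw [finsum_eq_sum_of_fintype, finsum_eq_sum_of_fintype, Fintype.sum_sum_type]
    simp
  -- the complement is W ∪ Wᶜ decomposition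
  have hsplit : ∀ f : SubV V 𝓔 → ℝ, (∑ᶠ v ∈ Wᶜ, f v) = (∑ᶠ v, f v) - f a := by
    intro f
    have h1 : (∑ᶠ v ∈ W ∪ Wᶜ, f v) = (∑ᶠ v ∈ W, f v) + ∑ᶠ v ∈ Wᶜ, f v :=
      finsum_mem_union disjoint_compl_right (Set.toFinite _) (Set.toFinite _)
    rw [Set.union_compl_self, finsum_mem_univ] at h1
    rw [hW] at h1
    rw [finsum_mem_singleton] at h1
    linarith
  -- β of the singleton
  have hβ1 : betaDiv (subS s t 𝓔) (subT s t 𝓔) D (Sum.elim μ fun _ => 0) W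
      = (D a : ℝ) + 1 := by
    rw [betaDiv, hδ, hW, finsum_mem_singleton, finsum_mem_singleton, ha]
    norm_num
  -- β of the complement
  have hβ2 : betaDiv (subS s t 𝓔) (subT s t 𝓔) D (Sum.elim μ fun _ => 0) Wᶜ
      = 1 - (D a : ℝ) := by
    rw [betaDiv, hδc, hsplit, hsplit, hμtot, hdeg, ha]
    push_cast
    simp
    ring
  have hne1 : W ≠ Set.univ := by
    intro h
    have : Sum.inl v₀ ∈ W := h ▸ Set.mem_univ _
    simp [hW, ha] at this
  have hne2 : Wᶜ ≠ Set.univ := by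
    intro h
    have : a ∈ Wᶜ := h ▸ Set.mem_univ _
    simp [hW] at this
  have h1 := (hqs W hne1).1
  have h2 := (hqs Wᶜ hne2).2 (by simp [hW, ha])
  rw [hβ1] at h1
  rw [hβ2] at h2
  have l1 : (-1 : ℤ) ≤ D a := by exact_mod_cast (by linarith : (-1 : ℝ) ≤ (D a : ℝ))
  have l2 : (D a : ℤ) < 1 := by exact_mod_cast (by linarith : ((D a : ℤ) : ℝ) < 1)
  omega


end
end

section
/- (Divisor form of Proposition 2.2(i); the pseudo-divisor case follows by applying this to subdivisions.) Let Γ = (V,E,s,t) be a finite connected multigraph, v₀ ∈ V, D : V → ℤ a divisor and μ : V → ℝ a polarization with ∑ D = ∑ μ. Let C ⊆ E and let Γ' = Γ/C be the contraction of the edges in C: V' := V/∼_C is the quotient of V by the equivalence relation generated by the pairs (s e, t e) for e ∈ C, with quotient map q : V → V', and E' := E∖C with endpoints q∘s, q∘t. Define the pushforwards ι_*D(v') := ∑_{v : q v = v'} D v and ι_*μ(v') := ∑_{v : q v = v'} μ v. If D is (v₀,μ)-quasistable on Γ, then ι_*D is (q v₀, ι_*μ)-quasistable on Γ'. -/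
noncomputable section

/-- The relation on `V` generated by the edges in `C` (used for the contraction `Γ/C`). -/
def contrRel {V E : Type} (s t : E → V) (C : Finset E) : V → V → Prop :=
  GraphStep (fun e : {e // e ∈ C} => s e.1) (fun e : {e // e ∈ C} => t e.1)

lemma push_sum {V V' : Type} [Fintype V] (q : V → V') (hq : Function.Surjective q)
    (W' : Set V') (f : V → ℝ) :
    (∑ᶠ v' ∈ W', ∑ᶠ v ∈ {v : V | q v = v'}, f v) = ∑ᶠ v ∈ q ⁻¹' W', f v := by
  haveI : Finite V' := Finite.of_surjective q hq
  rw [← finsum_mem_biUnion]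
  · congr 1
    ext v; simp
  · intro a _ b _ hab
    intro S hSa hSb v hv
    exact absurd ((hSa hv).symm.trans (hSb hv)) hab
  · exact Set.toFinite _
  · exact fun i _ => Set.toFinite _

/-- Proposition 2.2(i), divisor form: quasistability is preserved by pushforward along
the contraction `Γ → Γ/C` of a subset `C` of edges. -/
theorem contraction_quasistable (V E : Type) [Fintype V] [Fintype E] (s t : E → V)
    (hconn : GraphConnected s t) (v₀ : V) (D : V → ℤ) (μ : V → ℝ)
    (hdeg : (∑ᶠ v, (D v : ℝ)) = ∑ᶠ v, μ v) (C : Finset E)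
    (hqs : Quasistable s t v₀ D μ) :
    Quasistable (E := {e // e ∉ C})
      (fun e => Quot.mk (contrRel s t C) (s e.1))
      (fun e => Quot.mk (contrRel s t C) (t e.1))
      (Quot.mk (contrRel s t C) v₀)
      (fun v' => ∑ᶠ v ∈ {v : V | Quot.mk (contrRel s t C) v = v'}, D v)
      (fun v' => ∑ᶠ v ∈ {v : V | Quot.mk (contrRel s t C) v = v'}, μ v) := by
  set q := Quot.mk (contrRel s t C) with hqdef
  have hqsurj : Function.Surjective q := Quot.exists_rep
  have hsat : ∀ e ∈ C, q (s e) = q (t e) := fun e he =>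
    Quot.sound ⟨⟨e, he⟩, rfl, rfl⟩
  intro W' hW'
  set W : Set V := q ⁻¹' W' with hWdef
  have hWne : W ≠ Set.univ := by
    intro h
    apply hW'
    rw [Set.preimage_eq_univ_iff] at h
    exact Set.eq_univ_of_univ_subset (hqsurj.range_eq ▸ h)
  have hbeta : betaDiv (fun e : {e // e ∉ C} => q (s e.1)) (fun e => q (t e.1))
      (fun v' => ∑ᶠ v ∈ {v : V | q v = v'}, D v)
      (fun v' => ∑ᶠ v ∈ {v : V | q v = v'}, μ v) W' = betaDiv s t D μ W := by
    have hd : edgeDelta (fun e : {e // e ∉ C} => q (s e.1)) (fun e => q (t e.1)) W'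
        = edgeDelta s t W := by
      unfold edgeDelta
      apply Nat.card_congr
      refine ⟨fun e => ⟨e.1.1, e.2⟩, fun e => ⟨⟨e.1, ?_⟩, e.2⟩, fun e => rfl, fun e => rfl⟩
      intro heC
      have := hsat e.1 heC
      rcases e.2 with ⟨h1, h2⟩ | ⟨h1, h2⟩
      · exact h2 (show q (t e.1) ∈ W' from this ▸ h1)
      · exact h1 (show q (s e.1) ∈ W' from this ▸ h2)
    have hD : (∑ᶠ v' ∈ W', ((∑ᶠ v ∈ {v : V | q v = v'}, D v : ℤ) : ℝ))
        = ∑ᶠ v ∈ W, (D v : ℝ) := by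
      rw [← push_sum q hqsurj W' (fun v => (D v : ℝ))]
      apply finsum_mem_congr rfl
      intro v' _
      exact AddMonoidHom.map_finsum_mem _ (Int.castAddHom ℝ) (Set.toFinite _)
    have hμ : (∑ᶠ v' ∈ W', ∑ᶠ v ∈ {v : V | q v = v'}, μ v) = ∑ᶠ v ∈ W, μ v :=
      push_sum q hqsurj W' μ
    unfold betaDiv
    rw [hd, hμ, hD]
  have := hqs W hWne
  constructor
  · rw [hbeta]; exact this.1
  · intro hv
    rw [hbeta]
    exact this.2 hv

end
end

section
/- Let Γ = (V,E,s,t) be a finite connected multigraph, v₀ ∈ V, μ : V → ℝ a polarization of degree d (∑ μ = d), 𝓔 ⊆ E, and let (𝓔,D) be a pseudo-divisor of degree d: D : V ⊕ 𝓔 → ℤ with D(w) = −1 for every exceptional vertex w ∈ 𝓔 and ∑ D = d. Then D is (v₀, μ^𝓔)-quasistable on the subdivision Γ^𝓔 if and only if 𝓔 is nondisconnecting (i.e., the graph Γ_𝓔 := (V, E∖𝓔) is connected) and the divisor D|_V is (v₀, μ_𝓔)-quasistable on Γ_𝓔, where μ_𝓔(v) := μ(v) + val_𝓔(v)/2 and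 val_𝓔(v) := #{e ∈ 𝓔 : s e = v} + #{e ∈ 𝓔 : t e = v}. -/
noncomputable section

/-- `val_𝓔(v)`: the number of half-edges of `𝓔` incident to `v` (loops count twice). -/
def valIn {V E : Type} (s t : E → V) (𝓔 : Finset E) (v : V) : ℕ :=
  Nat.card {e : {e // e ∈ 𝓔} // s e.1 = v} + Nat.card {e : {e // e ∈ 𝓔} // t e.1 = v}


/-!
Write a vertex set `W` of `Γ^𝓔` as `A = W ∩ V` together with some exceptional vertices. Each
exceptional vertex carries `D = -1` and two half-edges, and `μ_𝓔` moves those half-edges onto `V`;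
comparing the two gives `β(W) = β_𝓔(A) + c(W)`, where `c(W) ≥ 0` counts the edges of `Γ^𝓔` from `A`
to exceptional vertices outside `W`. Putting into `W` every exceptional vertex adjacent to `A` makes
`c(W) = 0`, so quasistability on `Γ^𝓔` restricts to `Γ_𝓔`. Conversely `c(W) ≥ 0`, and if `A = V`
but `W` misses an exceptional vertex then `c(W) ≥ 2` while `β_𝓔(V) = 0` by the degree count.
Connectivity of `Γ_𝓔` is forced by quasistability itself: for the component `A` of `v₀`,
`β(A) + β(Aᶜ) = δ_A = 0`, against `β(A) > 0` and `β(Aᶜ) ≥ 0`.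
-/

open Finset

section Beta

variable {V E : Type} (s t : E → V)

theorem edgeDelta_compl (A : Set V) : edgeDelta s t Aᶜ = edgeDelta s t A :=
  Nat.card_congr <| Equiv.subtypeEquivRight fun e => by simp only [Set.mem_compl_iff]; tauto

theorem edgeDelta_univ : edgeDelta s t Set.univ = 0 := by
  simp [edgeDelta]

theorem graphConnected_of_edgeDelta_ne_zero (v₀ : V)
    (h : ∀ A : Set V, v₀ ∈ A → A ≠ Set.univ → edgeDelta s t A ≠ 0) : GraphConnected s t := by
  let A := {v | Relation.EqvGen (GraphStep s t) v₀ v}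
  have hA : A = Set.univ := by
    by_contra hA
    refine h A (.refl v₀) hA (Nat.card_eq_zero.mpr <| .inl ⟨?_⟩)
    rintro ⟨e, ⟨hs, ht⟩ | ⟨hs, ht⟩⟩
    · exact ht (hs.trans _ _ _ (.rel _ _ ⟨e, rfl, rfl⟩))
    · exact hs (ht.trans _ _ _ (.symm _ _ (.rel _ _ ⟨e, rfl, rfl⟩)))
  have hv₀ (v : V) : Quot.mk (GraphStep s t) v = Quot.mk _ v₀ :=
    (Quot.eqvGen_sound (hA ▸ Set.mem_univ v : v ∈ A)).symm
  refine ⟨⟨v₀⟩, Nat.card_eq_one_iff_unique.mpr ⟨⟨?_⟩, ⟨Quot.mk _ v₀⟩⟩⟩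
  rintro ⟨a⟩ ⟨b⟩
  exact (hv₀ a).trans (hv₀ b).symm

variable (D : V → ℤ) (μ : V → ℝ)

theorem betaDiv_univ : betaDiv s t D μ Set.univ = ∑ᶠ v, (D v : ℝ) - ∑ᶠ v, μ v := by
  simp [betaDiv, edgeDelta_univ]

variable [Finite V]

theorem betaDiv_add_betaDiv_compl (A : Set V) :
    betaDiv s t D μ A + betaDiv s t D μ Aᶜ = betaDiv s t D μ Set.univ + edgeDelta s t A := by
  have hsplit (f : V → ℝ) : ∑ᶠ v ∈ A, f v + ∑ᶠ v ∈ Aᶜ, f v = ∑ᶠ v, f v := by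
    rw [← finsum_mem_union disjoint_compl_right (Set.toFinite _) (Set.toFinite _),
      Set.union_compl_self, finsum_mem_univ]
  rw [betaDiv_univ]
  simp only [betaDiv, edgeDelta_compl]
  linarith [hsplit (fun v => (D v : ℝ)), hsplit μ]

variable {s t D μ}

theorem Quasistable.graphConnected {v₀ : V} (hq : Quasistable s t v₀ D μ)
    (h0 : betaDiv s t D μ Set.univ = 0) : GraphConnected s t := by
  refine graphConnected_of_edgeDelta_ne_zero s t v₀ fun A hv₀ hA hδ => ?_
  have hAc : Aᶜ ≠ Set.univ := fun h => (h ▸ Set.mem_univ v₀ : v₀ ∈ Aᶜ) hv₀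
  have := betaDiv_add_betaDiv_compl s t D μ A
  rw [h0, hδ, Nat.cast_zero, add_zero] at this
  linarith [(hq A hA).2 hv₀, (hq Aᶜ hAc).1]

end Beta

theorem betaDiv_eq_sum {V E : Type} [Fintype V] [Fintype E] (s t : E → V) (D : V → ℤ) (μ : V → ℝ)
    (W : Set V) [DecidablePred (· ∈ W)] :
    betaDiv s t D μ W = ∑ v, (if v ∈ W then (D v : ℝ) - μ v else 0)
      + (∑ e, if (s e ∈ W ∧ t e ∉ W) ∨ (s e ∉ W ∧ t e ∈ W) then 1 else 0) / 2 := by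
  classical
  simp only [betaDiv, edgeDelta, finsum_eq_sum_of_fintype, finsum_eq_if, Nat.card_eq_fintype_card,
    Fintype.card_subtype, card_filter, ← sum_sub_distrib]
  push_cast
  congr 2 with v
  split_ifs <;> simp

theorem sum_ite_mem_natCard_fiber {ι V : Type} [Fintype ι] [Fintype V] (f : ι → V) (A : Set V)
    [DecidablePred (· ∈ A)] :
    ∑ v, (if v ∈ A then (Nat.card {i // f i = v} : ℝ) else 0) = ∑ i, if f i ∈ A then 1 else 0 := by
  classical
  simp only [Nat.card_eq_fintype_card, Fintype.card_subtype, card_filter, Nat.cast_sum,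
    Nat.cast_one, ← sum_filter]
  rw [sum_comm' (s' := fun i => {f i}) (t' := {i | f i ∈ A})
    (by simp +contextual [and_comm, eq_comm])]
  simp

section Subdivision

variable {V E : Type} (s t : E → V) (𝓔 : Finset E)

abbrev inducedPolarization (μ : V → ℝ) (v : V) : ℝ := μ v + (valIn s t 𝓔 v : ℝ) / 2

-- The number of edges of `Γ^𝓔` from `W ∩ V` to exceptional vertices outside `W`.
open Classical in
def exceptionalOutflow (W : Set (SubV V 𝓔)) : ℝ :=
  ∑ e : 𝓔, if .inr e ∈ W then 0 else
    ((if .inl (s e) ∈ W then 1 else 0) + (if .inl (t e) ∈ W then 1 else 0))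

variable {s t 𝓔} in
theorem exceptionalOutflow_nonneg (W : Set (SubV V 𝓔)) : 0 ≤ exceptionalOutflow s t 𝓔 W :=
  sum_nonneg fun _ _ => by split_ifs <;> norm_num

variable {s t 𝓔} in
theorem exceptionalOutflow_eq_zero {W : Set (SubV V 𝓔)}
    (hW : ∀ e : 𝓔, .inl (s e) ∈ W ∨ .inl (t e) ∈ W → .inr e ∈ W) :
    exceptionalOutflow s t 𝓔 W = 0 :=
  sum_eq_zero fun e _ => by
    by_cases he : Sum.inr e ∈ W
    · simp [he]
    · simp [he, not_or.mp (mt (hW e) he)]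

variable {s t 𝓔} in
theorem two_le_exceptionalOutflow {W : Set (SubV V 𝓔)} (hV : ∀ v, .inl v ∈ W) {e : 𝓔}
    (he : .inr e ∉ W) : 2 ≤ exceptionalOutflow s t 𝓔 W := by
  classical
  refine le_of_eq_of_le ?_ (single_le_sum (fun e _ => ?_) (mem_univ e))
  · simp [he, hV, one_add_one_eq_two]
  · split_ifs <;> norm_num

variable [Fintype V]

theorem sum_ite_mem_valIn (A : Set V) [DecidablePred (· ∈ A)] :
    ∑ v, (if v ∈ A then (valIn s t 𝓔 v : ℝ) else 0)
      = ∑ e : 𝓔, ((if s e ∈ A then 1 else 0) + (if t e ∈ A then 1 else 0)) := by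
  rw [sum_add_distrib, ← sum_ite_mem_natCard_fiber (fun e : 𝓔 => s e),
    ← sum_ite_mem_natCard_fiber (fun e : 𝓔 => t e), ← sum_add_distrib]
  refine sum_congr rfl fun v _ => ?_
  split_ifs <;> simp [valIn]

variable [Fintype E]

-- What an exceptional vertex `e` (value `-1`, two half-edges) contributes to `β` on `Γ^𝓔`, against
-- its two half-edges counted by `μ_𝓔`; `p`, `a`, `b` say whether `e`, `s e`, `t e` lie in `W`.
theorem exceptional_vertex_balance (p a b : Prop) [Decidable p] [Decidable a] [Decidable b] :
    (if p then (-1 : ℝ) else 0)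
        + ((if (p ∧ ¬b) ∨ (¬p ∧ b) then 1 else 0) + (if (a ∧ ¬p) ∨ (¬a ∧ p) then 1 else 0)) / 2
      = -((if a then 1 else 0) + (if b then 1 else 0)) / 2
        + if p then 0 else (if a then 1 else 0) + (if b then 1 else 0) := by
  by_cases p <;> by_cases a <;> by_cases b <;> simp [*] <;> norm_num

open Classical in
theorem betaDiv_subdivision (μ : V → ℝ) (D : SubV V 𝓔 → ℤ) (hexc : ∀ e, D (.inr e) = -1)
    (W : Set (SubV V 𝓔)) :
    betaDiv (subS s t 𝓔) (subT s t 𝓔) D (Sum.elim μ fun _ => 0) W =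
      betaDiv (Subtype.restrict (· ∉ 𝓔) s) (Subtype.restrict (· ∉ 𝓔) t) (D ∘ Sum.inl)
          (inducedPolarization s t 𝓔 μ) (Sum.inl ⁻¹' W)
        + exceptionalOutflow s t 𝓔 W := by
  have hval := sum_ite_mem_valIn s t 𝓔 (Sum.inl ⁻¹' W)
  rw [exceptionalOutflow, betaDiv_eq_sum, betaDiv_eq_sum, Fintype.sum_sum_type,
    Fintype.sum_sum_type, Fintype.sum_prod_type]
  simp only [Fintype.sum_bool, subS, subT, Sum.elim_inl, Sum.elim_inr, hexc, Function.comp_apply,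
    Subtype.restrict, Set.mem_preimage, Int.cast_neg, Int.cast_one, sub_zero] at hval ⊢
  have hvert : ∑ v, (if Sum.inl v ∈ W then (D (.inl v) : ℝ) - inducedPolarization s t 𝓔 μ v else 0)
      = ∑ v, (if Sum.inl v ∈ W then (D (.inl v) : ℝ) - μ v else 0)
        - (∑ v, if Sum.inl v ∈ W then (valIn s t 𝓔 v : ℝ) else 0) / 2 := by
    rw [sum_div, ← sum_sub_distrib]
    refine sum_congr rfl fun v _ => ?_
    split_ifs <;> ring
  have hexcess := Fintype.sum_congr _ _ fun (e : 𝓔) =>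
    exceptional_vertex_balance (.inr e ∈ W) (.inl (s e) ∈ W) (.inl (t e) ∈ W)
  rw [hvert, hval]
  simp only [sum_add_distrib, add_div, neg_div, sum_div, neg_add, sum_neg_distrib] at hexcess ⊢
  -- The decidability instances of the `if`s still mention `subS` and `subT`.
  linear_combination (norm := ring1!) hexcess

theorem betaDiv_restrict_univ (μ : V → ℝ) (D : SubV V 𝓔 → ℤ) (hexc : ∀ e, D (.inr e) = -1) :
    betaDiv (Subtype.restrict (· ∉ 𝓔) s) (Subtype.restrict (· ∉ 𝓔) t) (D ∘ Sum.inl)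
        (inducedPolarization s t 𝓔 μ) Set.univ
      = ∑ᶠ w, (D w : ℝ) - ∑ᶠ v, μ v := by
  have h := betaDiv_subdivision s t 𝓔 μ D hexc Set.univ
  rw [exceptionalOutflow_eq_zero fun _ _ => Set.mem_univ _, add_zero, betaDiv_univ,
    Set.preimage_univ] at h
  rw [← h]
  simp [finsum_eq_sum_of_fintype]

variable {s t 𝓔} {v₀ : V} {μ : V → ℝ} {D : SubV V 𝓔 → ℤ}

theorem Quasistable.of_subdivision (hexc : ∀ e, D (.inr e) = -1)
    (hq : Quasistable (subS s t 𝓔) (subT s t 𝓔) (.inl v₀) D (Sum.elim μ fun _ => 0)) :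
    Quasistable (Subtype.restrict (· ∉ 𝓔) s) (Subtype.restrict (· ∉ 𝓔) t) v₀ (D ∘ Sum.inl)
      (inducedPolarization s t 𝓔 μ) := by
  intro A hA
  let W : Set (SubV V 𝓔) := {w | Sum.elim (· ∈ A) (fun e : 𝓔 => s e ∈ A ∨ t e ∈ A) w}
  obtain ⟨v, hv⟩ := (Set.ne_univ_iff_exists_notMem A).mp hA
  have hW : W ≠ Set.univ := fun h => hv (h ▸ Set.mem_univ (Sum.inl v) : Sum.inl v ∈ W)
  have hβ := betaDiv_subdivision s t 𝓔 μ D hexc W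
  rw [exceptionalOutflow_eq_zero fun _ => id, add_zero,
    show Sum.inl ⁻¹' W = A from rfl] at hβ
  rw [← hβ]
  exact hq W hW

theorem Quasistable.subdivision (hexc : ∀ e, D (.inr e) = -1)
    (h0 : betaDiv (Subtype.restrict (· ∉ 𝓔) s) (Subtype.restrict (· ∉ 𝓔) t) (D ∘ Sum.inl)
        (inducedPolarization s t 𝓔 μ) Set.univ = 0)
    (hq : Quasistable (Subtype.restrict (· ∉ 𝓔) s) (Subtype.restrict (· ∉ 𝓔) t) v₀ (D ∘ Sum.inl)
      (inducedPolarization s t 𝓔 μ)) :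
    Quasistable (subS s t 𝓔) (subT s t 𝓔) (.inl v₀) D (Sum.elim μ fun _ => 0) := by
  intro W hW
  rw [betaDiv_subdivision s t 𝓔 μ D hexc W]
  have hout := exceptionalOutflow_nonneg (s := s) (t := t) W
  by_cases hA : Sum.inl ⁻¹' W = Set.univ
  · obtain ⟨w, hw⟩ := (Set.ne_univ_iff_exists_notMem W).mp hW
    have hV (v : V) : Sum.inl v ∈ W := Set.eq_univ_iff_forall.mp hA v
    obtain ⟨e, rfl⟩ : ∃ e, w = .inr e := by
      rcases w with v | e
      · exact absurd (hV v) hw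
      · exact ⟨e, rfl⟩
    have := two_le_exceptionalOutflow (s := s) (t := t) hV hw
    rw [hA, h0]
    exact ⟨by linarith, fun _ => by linarith⟩
  · obtain ⟨hβ, hβ₀⟩ := hq _ hA
    exact ⟨by linarith, fun hv₀ => by linarith [hβ₀ hv₀]⟩

end Subdivision

theorem pseudo_quasistable_iff_general (V E : Type) [Fintype V] [Fintype E] (s t : E → V)
    (v₀ : V) (μ : V → ℝ) (d : ℝ)
    (hμ : (∑ᶠ v, μ v) = d) (𝓔 : Finset E) (D : SubV V 𝓔 → ℤ)
    (hexc : ∀ w : {e // e ∈ 𝓔}, D (Sum.inr w) = -1)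
    (hdeg : (∑ᶠ w, (D w : ℝ)) = d) :
    Quasistable (subS s t 𝓔) (subT s t 𝓔) (Sum.inl v₀) D (Sum.elim μ fun _ => 0) ↔
      (GraphConnected (fun e : {e // e ∉ 𝓔} => s e.1) (fun e : {e // e ∉ 𝓔} => t e.1) ∧
       Quasistable (fun e : {e // e ∉ 𝓔} => s e.1) (fun e : {e // e ∉ 𝓔} => t e.1)
         v₀ (fun v => D (Sum.inl v)) (fun v => μ v + (valIn s t 𝓔 v : ℝ) / 2)) := by
  have h0 := betaDiv_restrict_univ s t 𝓔 μ D hexc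
  rw [hdeg, hμ, sub_self] at h0
  exact ⟨fun hq => ⟨(hq.of_subdivision hexc).graphConnected h0, hq.of_subdivision hexc⟩,
    fun ⟨_, hq⟩ => hq.subdivision hexc h0⟩

/-- Proposition 2.2(ii): a degree-`d` pseudo-divisor `(𝓔, D)` is `(v₀, μ^𝓔)`-quasistable
on the subdivision `Γ^𝓔` if and only if `𝓔` is nondisconnecting and `D|_V` is
`(v₀, μ_𝓔)`-quasistable on `Γ_𝓔 = (V, E∖𝓔)`, where `μ_𝓔(v) = μ(v) + val_𝓔(v)/2`. -/
theorem pseudo_quasistable_iff (V E : Type) [Fintype V] [Fintype E] (s t : E → V)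
    (hconn : GraphConnected s t) (v₀ : V) (μ : V → ℝ) (d : ℝ)
    (hμ : (∑ᶠ v, μ v) = d) (𝓔 : Finset E) (D : SubV V 𝓔 → ℤ)
    (hexc : ∀ w : {e // e ∈ 𝓔}, D (Sum.inr w) = -1)
    (hdeg : (∑ᶠ w, (D w : ℝ)) = d) :
    Quasistable (subS s t 𝓔) (subT s t 𝓔) (Sum.inl v₀) D (Sum.elim μ fun _ => 0) ↔
      (GraphConnected (fun e : {e // e ∉ 𝓔} => s e.1) (fun e : {e // e ∉ 𝓔} => t e.1) ∧
       Quasistable (fun e : {e // e ∉ 𝓔} => s e.1) (fun e : {e // e ∉ 𝓔} => t e.1)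
         v₀ (fun v => D (Sum.inl v)) (fun v => μ v + (valIn s t 𝓔 v : ℝ) / 2)) :=
  pseudo_quasistable_iff_general V E s t v₀ μ d hμ 𝓔 D hexc hdeg

end
end

section
/- Let Γ = (V,E,s,t) be a finite connected multigraph, 𝓔 ⊆ E a nondisconnecting subset, and φ an acyclic flow on the subdivision Γ^𝓔 such that div φ takes value −1 at every exceptional vertex (equivalently, φ(e,1) = φ(e,0) + 1 for every e ∈ 𝓔). Then the linear map F restricts to a bijection from the cone C_{Γ,𝓔,φ} onto K_{Γ,𝓔,φ} whose inverse is induced by an integral linear map: there exists an ℝ-linear map G : (E → ℝ) → ((E∖𝓔) ⊕ 𝓔×Bool → ℝ) carrying integer-valued vectors to integer-valued vectors such that G(F x) = x for every x ∈ C_{Γ,𝓔,φ}. -/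
noncomputable section

/-- A flow is acyclic if the digraph obtained by contracting all edges of flow `0`
has no directed cycles. -/
def FlowAcyclic {V E : Type} (s t : E → V) (φ : E → ℕ) : Prop :=
  ¬ ∃ a : E, φ a ≠ 0 ∧
    Relation.ReflTransGen
      (fun v w => (∃ b, φ b ≠ 0 ∧ s b = v ∧ t b = w) ∨
        (∃ b, φ b = 0 ∧ ((s b = v ∧ t b = w) ∨ (s b = w ∧ t b = v)))) (t a) (s a)

/-- The boundary map `d*` with real coefficients. -/
def dstarR {V E : Type} (s t : E → V) (z : E → ℝ) (v : V) : ℝ :=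
  (∑ᶠ e ∈ {e : E | t e = v}, z e) - ∑ᶠ e ∈ {e : E | s e = v}, z e

/-- The cone `C_{Γ,𝓔,φ}` (stated for an arbitrary graph; it is applied to `Γ^𝓔`):
nonnegative vectors orthogonal to `(z a · φ a)_a` for every `1`-cycle `z`. -/
def Ccone {V E : Type} (s t : E → V) (φ : E → ℕ) : Set (E → ℝ) :=
  {x | (∀ a, 0 ≤ x a) ∧
    ∀ z : E → ℝ, (∀ v, dstarR s t z v = 0) → (∑ᶠ a, z a * (φ a : ℝ) * x a) = 0}

/-- The linear map `F : ℝ^{E(Γ^𝓔)} → ℝ^{E(Γ)}` adding the lengths of the two halves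
of each subdivided edge. -/
def Fmap {E : Type} [DecidableEq E] (𝓔 : Finset E) (x : SubE 𝓔 → ℝ) : E → ℝ :=
  fun e => if h : e ∈ 𝓔 then x (Sum.inr (⟨e, h⟩, false)) + x (Sum.inr (⟨e, h⟩, true))
    else x (Sum.inl ⟨e, h⟩)

/-- The cone `K_{Γ,𝓔,φ} = F(C_{Γ,𝓔,φ})`. -/
def Kcone {V E : Type} [DecidableEq E] (s t : E → V) (𝓔 : Finset E)
    (φ : SubE 𝓔 → ℕ) : Set (E → ℝ) :=
  Fmap 𝓔 '' Ccone (subS s t 𝓔) (subT s t 𝓔) φ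

open Classical in
lemma finsum_mem_setOf {E M : Type*} [Fintype E] [AddCommMonoid M] (P : E → Prop) (f : E → M) :
    ∑ᶠ e ∈ {e | P e}, f e = ∑ e, if P e then f e else 0 := by
  rw [finsum_mem_def, finsum_eq_sum_of_fintype]
  exact Finset.sum_congr rfl fun e _ => by simp [Set.indicator_apply]

open Classical in
lemma chain_exists {V E : Type} [Fintype E] (s t : E → V)
    {v w : V} (h : Relation.EqvGen (GraphStep s t) v w) :
    ∃ z : E → ℤ, ∀ u : V,
      ((∑ e, if t e = u then (z e : ℝ) else 0) - ∑ e, if s e = u then (z e : ℝ) else 0)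
        = (if w = u then 1 else 0) - (if v = u then 1 else 0) := by
  induction h with
  | rel a b hab =>
    obtain ⟨e, he1, he2⟩ := hab
    refine ⟨fun e' => if e' = e then 1 else 0, fun u => ?_⟩
    have h1 : ∀ (g : E → V), (∑ e', if g e' = u then (((if e' = e then (1:ℤ) else 0) : ℤ) : ℝ) else 0)
        = if g e = u then 1 else 0 := by
      intro g
      rw [Finset.sum_congr rfl (g := fun e' => if e' = e then (if g e = u then (1:ℝ) else 0) else 0)
        (fun e' _ => by by_cases h : e' = e <;> simp [h])]
      simp [Finset.sum_ite_eq']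
    rw [h1 s, h1 t, he1, he2]
  | refl a => exact ⟨0, fun u => by simp⟩
  | symm a b _ ih =>
    obtain ⟨z, hz⟩ := ih
    refine ⟨fun e => -z e, fun u => ?_⟩
    have h1 : ∀ (g : E → V), (∑ e, if g e = u then ((-z e : ℤ) : ℝ) else 0)
        = -∑ e, if g e = u then (z e : ℝ) else 0 := by
      intro g
      rw [← Finset.sum_neg_distrib]
      exact Finset.sum_congr rfl fun e _ => by split <;> simp
    rw [h1 s, h1 t]
    linarith [hz u]
  | trans a b c _ _ ih1 ih2 =>
    obtain ⟨z1, hz1⟩ := ih1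
    obtain ⟨z2, hz2⟩ := ih2
    refine ⟨fun e => z1 e + z2 e, fun u => ?_⟩
    have h1 : ∀ (g : E → V), (∑ e, if g e = u then ((z1 e + z2 e : ℤ) : ℝ) else 0)
        = (∑ e, if g e = u then (z1 e : ℝ) else 0) + ∑ e, if g e = u then (z2 e : ℝ) else 0 := by
      intro g
      rw [← Finset.sum_add_distrib]
      exact Finset.sum_congr rfl fun e _ => by split <;> push_cast <;> simp
    rw [h1 s, h1 t]
    linarith [hz1 u, hz2 u]

/-- The integral inverse map. -/
def Gmap {E : Type} [Fintype E] [DecidableEq E] (𝓔 : Finset E) (φ : SubE 𝓔 → ℕ)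
    (z : {e // e ∈ 𝓔} → {a // a ∉ 𝓔} → ℤ) (u : E → ℝ) : SubE 𝓔 → ℝ :=
  fun a => match a with
  | .inl b => u b.1
  | .inr (e, true) => -(∑ b : {b // b ∉ 𝓔}, (z e b : ℝ) * (φ (.inl b) : ℝ) * u b.1)
      - (φ (.inr (e, false)) : ℝ) * u e.1
  | .inr (e, false) => u e.1 + (∑ b : {b // b ∉ 𝓔}, (z e b : ℝ) * (φ (.inl b) : ℝ) * u b.1)
      + (φ (.inr (e, false)) : ℝ) * u e.1

/-- Proposition 3.4 (Prop. `prop:isoCK`): if `𝓔` is nondisconnecting and `φ` is an acyclic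
flow on `Γ^𝓔` whose divisor is `−1` at every exceptional vertex, then `F` restricts to a
bijection `C_{Γ,𝓔,φ} → K_{Γ,𝓔,φ}` whose inverse is induced by an integral linear map. -/
theorem C_iso_K (V E : Type) [Fintype V] [Fintype E] [DecidableEq E] (s t : E → V)
    (hconn : GraphConnected s t) (𝓔 : Finset E)
    (hnd : GraphConnected (fun e : {e // e ∉ 𝓔} => s e.1) (fun e : {e // e ∉ 𝓔} => t e.1))
    (φ : SubE 𝓔 → ℕ)
    (hac : FlowAcyclic (subS s t 𝓔) (subT s t 𝓔) φ)
    (hdiv : ∀ w : {e // e ∈ 𝓔}, divFlow (subS s t 𝓔) (subT s t 𝓔) φ (Sum.inr w) = -1) :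
    Set.BijOn (Fmap 𝓔) (Ccone (subS s t 𝓔) (subT s t 𝓔) φ) (Kcone s t 𝓔 φ) ∧
    ∃ G : (E → ℝ) → (SubE 𝓔 → ℝ),
      IsLinearMap ℝ G ∧
      (∀ u : E → ℝ, (∀ e, ∃ m : ℤ, u e = m) → ∀ a, ∃ m : ℤ, G u a = m) ∧
      ∀ x ∈ Ccone (subS s t 𝓔) (subT s t 𝓔) φ, G (Fmap 𝓔 x) = x := by
  classical
  -- connectivity of the complement graph
  have hrel : ∀ v w : V,
      Relation.EqvGen (GraphStep (fun e : {e // e ∉ 𝓔} => s e.1) (fun e : {e // e ∉ 𝓔} => t e.1)) v w := by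
    intro v w
    obtain ⟨-, hb⟩ := hnd
    rw [b0, Nat.card_eq_one_iff_unique] at hb
    have := hb.1
    exact Quot.eq.mp (Subsingleton.elim _ _)
  have hchain : ∀ e : {e // e ∈ 𝓔}, ∃ z : {b // b ∉ 𝓔} → ℤ, ∀ u : V,
      ((∑ b : {b // b ∉ 𝓔}, if t b.1 = u then (z b : ℝ) else 0)
        - ∑ b : {b // b ∉ 𝓔}, if s b.1 = u then (z b : ℝ) else 0)
        = (if s e.1 = u then 1 else 0) - (if t e.1 = u then 1 else 0) := by
    intro e
    obtain ⟨z, hz⟩ := chain_exists _ _ (hrel (t e.1) (s e.1))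
    exact ⟨z, fun u => hz u⟩
  choose z hz using hchain
  -- divisor condition
  have hphi : ∀ e : {e // e ∈ 𝓔}, (φ (.inr (e, true)) : ℝ) = (φ (.inr (e, false)) : ℝ) + 1 := by
    intro e
    have h := hdiv e
    rw [divFlow, finsum_mem_setOf, finsum_mem_setOf] at h
    simp only [Fintype.sum_sum_type, Fintype.sum_prod_type, Fintype.sum_bool, subS, subT,
      reduceCtorEq, if_false, Sum.inr.injEq, Finset.sum_ite_eq', Finset.mem_univ, if_true,
      Finset.sum_const_zero, add_zero, zero_add] at h
    have : (φ (Sum.inr (e, true)) : ℤ) = (φ (Sum.inr (e, false)) : ℤ) + 1 := by omega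
    exact_mod_cast this
  -- the key identity on the cone
  have GF : ∀ x ∈ Ccone (subS s t 𝓔) (subT s t 𝓔) φ, Gmap 𝓔 φ z (Fmap 𝓔 x) = x := by
    intro x hx
    obtain ⟨-, hcyc⟩ := hx
    funext a
    rcases a with b | ⟨e, bb⟩
    · simp [Gmap, Fmap, b.2]
    · -- the 1-cycle supported on e and the chosen chain
      have hZ0 : ∀ v, dstarR (subS s t 𝓔) (subT s t 𝓔)
          (Sum.elim (fun b : {b // b ∉ 𝓔} => (z e b : ℝ))
            (fun p : {e' // e' ∈ 𝓔} × Bool => if p.1 = e then (1:ℝ) else 0)) v = 0 := by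
        intro v
        rw [dstarR, finsum_mem_setOf, finsum_mem_setOf]
        have swap : ∀ (g : {e' // e' ∈ 𝓔} → V) (w : V),
            (∑ e' : {e' // e' ∈ 𝓔}, if g e' = w then (if e' = e then (1:ℝ) else 0) else 0)
              = if g e = w then 1 else 0 := by
          intro g w
          rw [Finset.sum_congr rfl (g := fun e' => if e' = e then (if g e = w then (1:ℝ) else 0) else 0)
            (fun e' _ => by by_cases h : e' = e <;> simp [h])]
          simp [Finset.sum_ite_eq']
        rcases v with w | w
        · simp only [Fintype.sum_sum_type, Fintype.sum_prod_type, Fintype.sum_bool, subS, subT,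
            Sum.elim_inl, Sum.elim_inr, reduceCtorEq, if_false, Sum.inl.injEq,
            Finset.sum_const_zero, add_zero, zero_add]
          rw [swap, swap]
          linarith [hz e w]
        · simp only [Fintype.sum_sum_type, Fintype.sum_prod_type, Fintype.sum_bool, subS, subT,
            Sum.elim_inl, Sum.elim_inr, reduceCtorEq, if_false, Sum.inr.injEq,
            Finset.sum_const_zero, add_zero, zero_add, Finset.sum_ite_eq', Finset.mem_univ,
            if_true]
          ring
      have hkey := hcyc _ hZ0
      rw [finsum_eq_sum_of_fintype] at hkey
      simp only [Fintype.sum_sum_type, Fintype.sum_prod_type, Fintype.sum_bool, Sum.elim_inl,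
        Sum.elim_inr, ite_mul, one_mul, zero_mul, Finset.sum_add_distrib, Finset.sum_ite_eq',
        Finset.mem_univ, if_true] at hkey
      have hsum : (∑ b : {b // b ∉ 𝓔}, (z e b : ℝ) * (φ (.inl b) : ℝ) * Fmap 𝓔 x b.1)
          = ∑ b : {b // b ∉ 𝓔}, (z e b : ℝ) * (φ (.inl b) : ℝ) * x (.inl b) :=
        Finset.sum_congr rfl fun b _ => by simp [Fmap, b.2]
      have hF : Fmap 𝓔 x e.1 = x (.inr (e, false)) + x (.inr (e, true)) := by
        simp [Fmap, e.2]
      cases bb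
      · show Fmap 𝓔 x e.1 + (∑ b : {b // b ∉ 𝓔}, (z e b : ℝ) * (φ (.inl b) : ℝ) * Fmap 𝓔 x b.1)
            + (φ (.inr (e, false)) : ℝ) * Fmap 𝓔 x e.1 = x (.inr (e, false))
        rw [hsum, hF]
        linear_combination hkey - x (Sum.inr (e, true)) * hphi e
      · show -(∑ b : {b // b ∉ 𝓔}, (z e b : ℝ) * (φ (.inl b) : ℝ) * Fmap 𝓔 x b.1)
            - (φ (.inr (e, false)) : ℝ) * Fmap 𝓔 x e.1 = x (.inr (e, true))
        rw [hsum, hF]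
        linear_combination -hkey + x (Sum.inr (e, true)) * hphi e
  refine ⟨⟨fun x hx => ⟨x, hx, rfl⟩, fun x hx y hy h => by rw [← GF x hx, ← GF y hy, h],
    fun u hu => hu⟩, Gmap 𝓔 φ z, ⟨?_, ?_⟩, ?_, GF⟩
  · intro u v
    funext a
    rcases a with b | ⟨e, (_ | _)⟩ <;>
      simp [Gmap, mul_add, Finset.sum_add_distrib] <;> ring
  · intro c u
    funext a
    rcases a with b | ⟨e, bb⟩
    · simp [Gmap]
    · have hs : ∑ b : {b // b ∉ 𝓔}, (z e b : ℝ) * (φ (.inl b) : ℝ) * (c • u) b.1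
          = c * ∑ b : {b // b ∉ 𝓔}, (z e b : ℝ) * (φ (.inl b) : ℝ) * u b.1 := by
        rw [Finset.mul_sum]
        exact Finset.sum_congr rfl fun b _ => by simp only [Pi.smul_apply, smul_eq_mul]; ring
      cases bb
      · show (c • u) e.1 + (∑ b : {b // b ∉ 𝓔}, (z e b : ℝ) * (φ (.inl b) : ℝ) * (c • u) b.1)
            + (φ (.inr (e, false)) : ℝ) * (c • u) e.1
          = c • (u e.1 + (∑ b : {b // b ∉ 𝓔}, (z e b : ℝ) * (φ (.inl b) : ℝ) * u b.1)
            + (φ (.inr (e, false)) : ℝ) * u e.1)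
        rw [hs]
        simp only [Pi.smul_apply, smul_eq_mul]
        ring
      · show -(∑ b : {b // b ∉ 𝓔}, (z e b : ℝ) * (φ (.inl b) : ℝ) * (c • u) b.1)
            - (φ (.inr (e, false)) : ℝ) * (c • u) e.1
          = c • (-(∑ b : {b // b ∉ 𝓔}, (z e b : ℝ) * (φ (.inl b) : ℝ) * u b.1)
            - (φ (.inr (e, false)) : ℝ) * u e.1)
        rw [hs]
        simp only [Pi.smul_apply, smul_eq_mul]
        ring
  · intro u hu a
    choose m hm using hu
    rcases a with b | ⟨e, (_ | _)⟩
    · exact ⟨m b.1, hm b.1⟩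
    · exact ⟨m e.1 + (∑ b : {b // b ∉ 𝓔}, z e b * (φ (.inl b) : ℤ) * m b.1)
        + (φ (.inr (e, false)) : ℤ) * m e.1, by simp only [Gmap, hm]; push_cast; ring⟩
    · exact ⟨-(∑ b : {b // b ∉ 𝓔}, z e b * (φ (.inl b) : ℤ) * m b.1)
        - (φ (.inr (e, false)) : ℤ) * m e.1, by simp only [Gmap, hm]; push_cast; ring⟩

end
end

section
/- Let Γ = (V,E,s,t) be a finite connected multigraph, 𝓔 ⊆ E a nondisconnecting subset, and φ an acyclic flow on the subdivision Γ^𝓔 such that div φ takes value −1 at every exceptional vertex. Set 𝓕 := {e ∈ E∖𝓔 : φ(e) ≠ 0}. Then the dimension of the ℝ-linear span of K_{Γ,𝓔,φ} equals |E| − |𝓕| + b₀(Γ_{𝓔∪𝓕}) − 1, where b₀(Γ_{𝓔∪𝓕}) is the number of connected components of the graph (V, E∖(𝓔∪𝓕)). Moreover, dim K_{Γ,𝓔,φ} = 0 if and only if |V| = 1 and E = ∅; and dim K_{Γ,𝓔,φ} = 1 if and only if 𝓔 = ∅ and one of the following holds: (1) |V| = 2, Γ has no loops (s e ≠ t e for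 all e), and φ is not identically 0; (2) |V| = 2, Γ has no loops, |E| = 1 and φ = 0; (3) |V| = |E| = 1. -/
noncomputable section

/-!
`C_{Γ,𝓔,φ}` consists of the nonnegative `x` for which `φ · x` is a coboundary, since the range of
the coboundary map is the annihilator of the cycle space `ker d*`. An acyclic flow admits a
potential that increases strictly along every edge of nonzero flow; it yields a strictly positive
point of this space, so `C` spans it. Since `div φ = -1` at the exceptional vertices, the two
halves of a subdivided edge carry flows `p` and `p + 1`, and every value on that edge can be split
between them; hence `span K` is the space `Y` of `y : E → ℝ` with
`φ(e) y(e) = h(t e) - h(s e)` on `E ∖ 𝓔` for some potential `h`. Rank–nullity, applied to the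
parametrization of `Y` by such potentials and by the values of `y` off `𝓕`, gives
`dim Y = |E| - |𝓕| + b₀(Γ_{𝓔∪𝓕}) - 1`, that is `dim Y + 1 = |𝓔| + |E ∖ (𝓔 ∪ 𝓕)| + b₀(Γ_{𝓔∪𝓕})`.
The cases of dimension `0` and `1` then follow by counting: acyclicity forbids loops that carry
flow, subdivided loops, and a flow edge with the same endpoints as an edge of flow `0`.
-/

open Module

section Components
variable {ι κ : Type}

theorem b0_congr {p q : κ → Prop} (s t : κ → ι) (h : ∀ a, p a ↔ q a) :
    b0 (fun a : {a // p a} => s a) (fun a => t a) =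
      b0 (fun a : {a // q a} => s a) (fun a => t a) := by
  obtain rfl : p = q := funext fun a => propext (h a)
  rfl

theorem b0_of_isEmpty [IsEmpty κ] (s t : κ → ι) : b0 s t = Nat.card ι :=
  Nat.card_congr
    { toFun := Quot.lift id fun _ _ ⟨e, _⟩ => isEmptyElim e
      invFun := Quot.mk _
      left_inv := Quot.ind fun _ => rfl
      right_inv := fun _ => rfl }

theorem one_le_b0 [Finite ι] [Nonempty ι] (s t : κ → ι) : 1 ≤ b0 s t := by
  have : Finite (Quot (GraphStep s t)) := Finite.of_surjective _ Quot.mk_surjective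
  have : Nonempty (Quot (GraphStep s t)) := ⟨Quot.mk _ (Classical.arbitrary ι)⟩
  exact Nat.card_pos

theorem eq_of_b0_eq_one {s t : κ → ι} (h : b0 s t = 1) {v : ι} (hv : ∀ e, s e ≠ v ∧ t e ≠ v)
    (w : ι) : w = v := by
  have : Subsingleton (Quot (GraphStep s t)) := (Nat.card_eq_one_iff_unique.mp h).1
  let isV : Quot (GraphStep s t) → Prop := Quot.lift (· = v) fun _ _ ⟨e, hs, ht⟩ => by
    simp only [← hs, ← ht, (hv e).1, (hv e).2]
  have : isV (Quot.mk _ w) = isV (Quot.mk _ v) :=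
    congrArg isV (Subsingleton.elim (Quot.mk (GraphStep s t) w) (Quot.mk _ v))
  simpa [isV] using this

theorem forall_eq_or_eq_of_b0_eq_one {s t : κ → ι} (h : b0 s t = 1) {e₀ : κ}
    (he₀ : ∀ e, e = e₀) (v : ι) : v = s e₀ ∨ v = t e₀ := by
  by_contra! hv
  exact hv.1 (eq_of_b0_eq_one h (fun e => he₀ e ▸ ⟨Ne.symm hv.1, Ne.symm hv.2⟩) (s e₀)).symm

end Components

theorem sym2_eq_of_card_eq_two {V : Type} (hV : Nat.card V = 2) {a b c d : V} (hab : a ≠ b)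
    (hcd : c ≠ d) : s(a, b) = s(c, d) := by
  have hpair {x y : V} (hxy : x ≠ y) (v : V) : v = x ∨ v = y := by
    obtain ⟨z, -, hz⟩ := (Nat.card_eq_two_iff' x).mp hV
    by_cases hvx : v = x
    · exact .inl hvx
    · exact .inr ((hz v hvx).trans (hz y hxy.symm).symm)
  ext v
  simp only [Sym2.mem_iff]
  exact ⟨fun _ => hpair hcd v, fun _ => hpair hab v⟩

theorem Nat.card_eq_two_of_forall_eq_or_eq {V : Type} {a b : V} (hab : a ≠ b)
    (h : ∀ v, v = a ∨ v = b) : Nat.card V = 2 :=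
  Nat.card_eq_two_iff.mpr ⟨a, b, hab, Set.eq_univ_of_forall fun v => by simpa using h v⟩

section Cycles
variable {ι κ : Type} [Fintype κ]

theorem dstarR_eq_sum [DecidableEq ι] (s t : κ → ι) (z : κ → ℝ) (v : ι) :
    dstarR s t z v = ∑ a, ((if t a = v then z a else 0) - if s a = v then z a else 0) := by
  simp only [dstarR, finsum_mem_eq_toFinset_sum, Set.toFinset_ofPred, Finset.sum_filter,
    Finset.sum_sub_distrib]

theorem dstarR_single [DecidableEq ι] [DecidableEq κ] (s t : κ → ι) (a : κ) :
    dstarR s t (Pi.single a 1) = Pi.single (t a) 1 - Pi.single (s a) 1 := by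
  ext v
  rw [dstarR_eq_sum, Finset.sum_eq_single a (fun b _ hb => by simp [hb]) (by simp)]
  simp [Pi.single_apply, eq_comm]

theorem sum_mul_dstarR [Fintype ι] (s t : κ → ι) (z : κ → ℝ) (f : ι → ℝ) :
    ∑ v, f v * dstarR s t z v = ∑ a, z a * (f (t a) - f (s a)) := by
  classical
  simp only [dstarR_eq_sum, Finset.mul_sum]
  rw [Finset.sum_comm]
  refine Finset.sum_congr rfl fun a _ => ?_
  simp only [mul_sub, mul_ite, mul_zero, Finset.sum_sub_distrib, Finset.sum_ite_eq,
    Finset.mem_univ, if_true]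
  ring

def boundary (s t : κ → ι) : (κ → ℝ) →ₗ[ℝ] (ι → ℝ) where
  toFun := dstarR s t
  map_add' z w := by
    classical
    ext v
    simp only [dstarR_eq_sum, Pi.add_apply, ← Finset.sum_add_distrib]
    refine Finset.sum_congr rfl fun a _ => ?_
    split_ifs <;> ring
  map_smul' c z := by
    classical
    ext v
    simp only [dstarR_eq_sum, Pi.smul_apply, smul_eq_mul, RingHom.id_apply, Finset.mul_sum]
    refine Finset.sum_congr rfl fun a _ => ?_
    split_ifs <;> ring

/-- The range of the coboundary map is the annihilator of the kernel of its transpose `d*`. -/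
theorem exists_potential_of_orthogonal_cycles [Fintype ι] (s t : κ → ι) {y : κ → ℝ}
    (hy : ∀ z, (∀ v, dstarR s t z v = 0) → ∑ a, z a * y a = 0) :
    ∃ f : ι → ℝ, ∀ a, y a = f (t a) - f (s a) := by
  classical
  let ℓ : Dual ℝ (κ → ℝ) := ∑ a, y a • LinearMap.proj a
  have hℓ (z : κ → ℝ) : ℓ z = ∑ a, z a * y a := by
    simp [ℓ, mul_comm]
  have : ℓ ∈ (LinearMap.ker (boundary s t)).dualAnnihilator := by
    rw [Submodule.mem_dualAnnihilator]
    intro z hz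
    rw [hℓ]
    exact hy z fun v => congrFun hz v
  rw [← LinearMap.range_dualMap_eq_dualAnnihilator_ker] at this
  obtain ⟨g, hg⟩ := this
  refine ⟨fun v => g (Pi.single v 1), fun a => ?_⟩
  have := LinearMap.congr_fun hg (Pi.single a 1)
  simpa [hℓ, boundary, dstarR_single, Pi.single_apply] using this.symm

end Cycles

section Coboundaries
variable {ι κ : Type}

def weightedCoboundaries (s t : κ → ι) (P : κ → Prop) (c : κ → ℝ) : Submodule ℝ (κ → ℝ) where
  carrier := {y | ∃ h : ι → ℝ, ∀ a, P a → c a * y a = h (t a) - h (s a)}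
  add_mem' := by
    rintro y₁ y₂ ⟨h₁, hy₁⟩ ⟨h₂, hy₂⟩
    exact ⟨h₁ + h₂, fun a ha => by simp only [Pi.add_apply, mul_add, hy₁ a ha, hy₂ a ha]; ring⟩
  zero_mem' := ⟨0, fun a _ => by simp⟩
  smul_mem' := by
    rintro r y ⟨h, hy⟩
    exact ⟨r • h, fun a ha => by
      simp only [Pi.smul_apply, smul_eq_mul, mul_left_comm, hy a ha]; ring⟩

theorem mem_weightedCoboundaries {s t : κ → ι} {P : κ → Prop} {c : κ → ℝ} {y : κ → ℝ} :
    y ∈ weightedCoboundaries s t P c ↔ ∃ h : ι → ℝ, ∀ a, P a → c a * y a = h (t a) - h (s a) :=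
  Iff.rfl

theorem mem_Ccone_iff [Fintype ι] [Fintype κ] {s t : κ → ι} {φ : κ → ℕ} {x : κ → ℝ} :
    x ∈ Ccone s t φ ↔
      (∀ a, 0 ≤ x a) ∧ x ∈ weightedCoboundaries s t (fun _ => True) (fun a => φ a) := by
  simp only [Ccone, Set.mem_ofPred_eq, mem_weightedCoboundaries, forall_const,
    finsum_eq_sum_of_fintype]
  refine and_congr_right fun _ => ⟨fun hC => ?_, fun ⟨f, hf⟩ z hz => ?_⟩
  · exact exists_potential_of_orthogonal_cycles s t fun z hz => by
      simpa only [mul_assoc] using hC z hz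
  · calc ∑ a, z a * φ a * x a = ∑ a, z a * (f (t a) - f (s a)) := by simp only [mul_assoc, hf]
      _ = ∑ v, f v * dstarR s t z v := (sum_mul_dstarR s t z f).symm
      _ = 0 := by simp [hz]

theorem span_inter_nonneg_eq [Fintype κ] (L : Submodule ℝ (κ → ℝ)) {x₀ : κ → ℝ} (hx₀ : x₀ ∈ L)
    (hpos : ∀ a, 0 < x₀ a) : Submodule.span ℝ ((L : Set (κ → ℝ)) ∩ {x | ∀ a, 0 ≤ x a}) = L := by
  refine le_antisymm (Submodule.span_le.mpr Set.inter_subset_left) fun y hy => ?_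
  set r := ∑ a, |y a| / x₀ a
  have hshift : y + r • x₀ ∈ (L : Set (κ → ℝ)) ∩ {x | ∀ a, 0 ≤ x a} := by
    refine ⟨L.add_mem hy (L.smul_mem r hx₀), fun a => ?_⟩
    have hle : |y a| / x₀ a ≤ r :=
      Finset.single_le_sum (f := fun b => |y b| / x₀ b)
        (fun b _ => div_nonneg (abs_nonneg _) (hpos b).le) (Finset.mem_univ a)
    rw [div_le_iff₀ (hpos a)] at hle
    simp only [Pi.add_apply, Pi.smul_apply, smul_eq_mul]
    linarith [neg_abs_le (y a)]
  have : y = (y + r • x₀) - r • x₀ := by abel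
  rw [this]
  exact sub_mem (Submodule.subset_span hshift)
    (Submodule.smul_mem _ r (Submodule.subset_span ⟨hx₀, fun a => (hpos a).le⟩))

end Coboundaries

section Acyclic
variable {ι κ : Type} {s t : κ → ι} {φ : κ → ℕ}

def FlowStep (s t : κ → ι) (φ : κ → ℕ) (v w : ι) : Prop :=
  (∃ b, φ b ≠ 0 ∧ s b = v ∧ t b = w) ∨ (∃ b, φ b = 0 ∧ ((s b = v ∧ t b = w) ∨ (s b = w ∧ t b = v)))

theorem FlowAcyclic.not_reaches (hac : FlowAcyclic s t φ) {a : κ} (ha : φ a ≠ 0) :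
    ¬ Relation.ReflTransGen (FlowStep s t φ) (t a) (s a) :=
  fun h => hac ⟨a, ha, h⟩

theorem FlowAcyclic.ne_of_ne_zero (hac : FlowAcyclic s t φ) {a : κ} (ha : φ a ≠ 0) : s a ≠ t a :=
  fun h => hac.not_reaches ha (h ▸ .refl)

theorem FlowAcyclic.not_reverse (hac : FlowAcyclic s t φ) {a : κ} (ha : φ a ≠ 0) (b : κ) :
    ¬ (s b = t a ∧ t b = s a) := by
  rintro ⟨hs, ht⟩
  refine hac.not_reaches ha (.single ?_)
  by_cases hb : φ b = 0
  · exact .inr ⟨b, hb, .inl ⟨hs, ht⟩⟩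
  · exact .inl ⟨b, hb, hs, ht⟩

theorem FlowAcyclic.sym2_ne (hac : FlowAcyclic s t φ) {a b : κ} (ha : φ a ≠ 0) (hb : φ b = 0) :
    s(s a, t a) ≠ s(s b, t b) := by
  rw [Ne, Sym2.eq_iff]
  rintro (⟨hs, ht⟩ | ⟨hs, ht⟩)
  · exact hac.not_reaches ha (.single (.inr ⟨b, hb, .inr ⟨hs.symm, ht.symm⟩⟩))
  · exact hac.not_reverse ha b ⟨ht.symm, hs.symm⟩

/-- The potential of `v` is the number of vertices from which `v` can be reached. -/
theorem FlowAcyclic.exists_potential [Finite ι] (hac : FlowAcyclic s t φ) :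
    ∃ f : ι → ℝ, ∀ a, (φ a ≠ 0 → f (s a) < f (t a)) ∧ (φ a = 0 → f (s a) = f (t a)) := by
  let R := Relation.ReflTransGen (FlowStep s t φ)
  have hmono {v w : ι} (h : R v w) : {u | R u v} ⊆ {u | R u w} := fun _ hu => hu.trans h
  refine ⟨fun v => ({u | R u v}.ncard : ℝ), fun a => ⟨fun ha => ?_, fun ha => ?_⟩⟩
  · have hstep : R (s a) (t a) := .single (.inl ⟨a, ha, rfl, rfl⟩)
    beta_reduce
    exact_mod_cast Set.ncard_lt_ncard
      ⟨hmono hstep, fun h => hac.not_reaches ha (h Relation.ReflTransGen.refl)⟩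
  · have : {u | R u (s a)} = {u | R u (t a)} :=
      (hmono (.single (.inr ⟨a, ha, .inl ⟨rfl, rfl⟩⟩))).antisymm
        (hmono (.single (.inr ⟨a, ha, .inr ⟨rfl, rfl⟩⟩)))
    simp only [this]

theorem FlowAcyclic.span_Ccone [Fintype ι] [Fintype κ] (hac : FlowAcyclic s t φ) :
    Submodule.span ℝ (Ccone s t φ) = weightedCoboundaries s t (fun _ => True) (fun a => φ a) := by
  obtain ⟨f, hf⟩ := hac.exists_potential
  let x₀ : κ → ℝ := fun a => if φ a = 0 then 1 else (f (t a) - f (s a)) / φ a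
  have hx₀ : x₀ ∈ weightedCoboundaries s t (fun _ => True) (fun a => φ a) := by
    refine ⟨f, fun a _ => ?_⟩
    by_cases ha : φ a = 0
    · simp [x₀, ha, (hf a).2 ha]
    · simp only [x₀, if_neg ha]
      field_simp
  have hpos (a : κ) : 0 < x₀ a := by
    by_cases ha : φ a = 0
    · simp [x₀, ha]
    · simp only [x₀, if_neg ha]
      exact div_pos (sub_pos.mpr ((hf a).1 ha)) (by positivity)
  have hC : Ccone s t φ = (weightedCoboundaries s t (fun _ => True) (fun a => φ a) : Set _) ∩
      {x | ∀ a, 0 ≤ x a} := by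
    ext x
    rw [Set.mem_inter_iff, and_comm, mem_Ccone_iff]
    rfl
  rw [hC, span_inter_nonneg_eq _ hx₀ hpos]

end Acyclic

section Dimension

theorem Submodule.finrank_prod {K M N : Type*} [DivisionRing K] [AddCommGroup M] [Module K M]
    [AddCommGroup N] [Module K N] (p : Submodule K M) (q : Submodule K N)
    [FiniteDimensional K p] [FiniteDimensional K q] :
    finrank K (p.prod q) = finrank K p + finrank K q := by
  rw [← Module.finrank_prod]
  exact LinearEquiv.finrank_eq
    { toFun := fun x => (⟨x.1.1, x.2.1⟩, ⟨x.1.2, x.2.2⟩)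
      invFun := fun y => ⟨(y.1, y.2), y.1.2, y.2.2⟩
      map_add' := fun _ _ => rfl
      map_smul' := fun _ _ => rfl }

variable {ι κ : Type}

def constOnEdges (s t : κ → ι) : Submodule ℝ (ι → ℝ) where
  carrier := {h | ∀ a, h (s a) = h (t a)}
  add_mem' hf hg a := by simp [hf a, hg a]
  zero_mem' _ := rfl
  smul_mem' r _ hf a := by simp [hf a]

theorem finrank_constOnEdges [Fintype ι] (s t : κ → ι) : finrank ℝ (constOnEdges s t) = b0 s t := by
  have : Fintype (Quot (GraphStep s t)) := Fintype.ofFinite _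
  let pullback := LinearMap.funLeft ℝ ℝ (Quot.mk (GraphStep s t))
  have hrange : LinearMap.range pullback = constOnEdges s t := by
    refine le_antisymm ?_ fun h hh => ⟨Quot.lift h fun _ _ ⟨a, hs, ht⟩ => hs ▸ ht ▸ hh a, rfl⟩
    rintro _ ⟨g, rfl⟩ a
    exact congrArg g (Quot.sound ⟨a, rfl, rfl⟩)
  rw [← hrange, LinearMap.finrank_range_of_inj
    (LinearMap.funLeft_injective_of_surjective ℝ ℝ _ Quot.mk_surjective),
    Module.finrank_fintype_fun_eq_card, b0, Nat.card_eq_fintype_card]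

open Classical in
def weightedCoboundaryParam (s t : κ → ι) (P : κ → Prop) (c : κ → ℝ) :
    (ι → ℝ) × ({a // ¬ (P a ∧ c a ≠ 0)} → ℝ) →ₗ[ℝ] (κ → ℝ) where
  toFun x a := if h : P a ∧ c a ≠ 0 then (x.1 (t a) - x.1 (s a)) / c a else x.2 ⟨a, h⟩
  map_add' x y := by
    ext a
    simp only [Prod.fst_add, Prod.snd_add, Pi.add_apply]
    split_ifs <;> ring
  map_smul' r x := by
    ext a
    simp only [Prod.smul_fst, Prod.smul_snd, Pi.smul_apply, smul_eq_mul, RingHom.id_apply]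
    split_ifs <;> ring

theorem map_weightedCoboundaryParam (s t : κ → ι) (P : κ → Prop) (c : κ → ℝ) :
    ((constOnEdges (fun a : {a // P a ∧ c a = 0} => s a) (fun a => t a)).prod ⊤).map
      (weightedCoboundaryParam s t P c) = weightedCoboundaries s t P c := by
  classical
  ext y
  constructor
  · rintro ⟨⟨h, u⟩, ⟨hh, -⟩, rfl⟩
    refine ⟨h, fun a ha => ?_⟩
    by_cases hc : c a = 0
    · rw [hc, zero_mul]
      exact (sub_eq_zero.mpr (hh ⟨a, ha, hc⟩).symm).symm
    · simp [weightedCoboundaryParam, ha, hc]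
      field_simp
  · rintro ⟨h, hy⟩
    refine ⟨(h, fun a => y a), ⟨fun a => ?_, trivial⟩, ?_⟩
    · have := hy a a.2.1
      rw [a.2.2, zero_mul] at this
      linarith
    · ext a
      by_cases ha : P a ∧ c a ≠ 0
      · simp [weightedCoboundaryParam, ha, ← hy a ha.1]
      · simp [weightedCoboundaryParam, ha]

theorem weightedCoboundaryParam_eq_zero_iff {s t : κ → ι} {P : κ → Prop} {c : κ → ℝ}
    {x : (ι → ℝ) × ({a // ¬ (P a ∧ c a ≠ 0)} → ℝ)}
    (hx : x.1 ∈ constOnEdges (fun a : {a // P a ∧ c a = 0} => s a) (fun a => t a)) :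
    weightedCoboundaryParam s t P c x = 0 ↔
      x ∈ (constOnEdges (fun a : {a // P a} => s a) (fun a => t a)).prod ⊥ := by
  classical
  obtain ⟨h, u⟩ := x
  simp only [Submodule.mem_prod, Submodule.mem_bot, funext_iff, Pi.zero_apply,
    weightedCoboundaryParam, LinearMap.coe_mk, AddHom.coe_mk]
  constructor
  · intro H
    refine ⟨fun a => ?_, fun a => ?_⟩
    · by_cases hc : c a = 0
      · exact hx ⟨a, a.2, hc⟩
      · have := H a
        rw [dif_pos ⟨a.2, hc⟩, div_eq_zero_iff, sub_eq_zero] at this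
        exact (this.resolve_right hc).symm
    · simpa [dif_neg a.2] using H a
  · rintro ⟨hh, hu⟩ a
    split_ifs with ha
    · rw [hh ⟨a, ha.1⟩, sub_self, zero_div]
    · exact hu _

theorem finrank_weightedCoboundaries [Fintype ι] [Fintype κ] (s t : κ → ι) (P : κ → Prop)
    (c : κ → ℝ) :
    finrank ℝ (weightedCoboundaries s t P c) + b0 (fun a : {a // P a} => s a) (fun a => t a)
        + Nat.card {a // P a ∧ c a ≠ 0}
      = Nat.card κ + b0 (fun a : {a // P a ∧ c a = 0} => s a) (fun a => t a) := by
  classical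
  set G := weightedCoboundaryParam s t P c
  set M := (constOnEdges (fun a : {a // P a ∧ c a = 0} => s a) (fun a => t a)).prod
    (⊤ : Submodule ℝ ({a // ¬ (P a ∧ c a ≠ 0)} → ℝ))
  set K := (constOnEdges (fun a : {a // P a} => s a) (fun a => t a)).prod
    (⊥ : Submodule ℝ ({a // ¬ (P a ∧ c a ≠ 0)} → ℝ))
  have hKM : K ≤ M := fun x hx => ⟨fun a => hx.1 ⟨a, a.2.1⟩, trivial⟩
  have hker : LinearMap.ker (G ∘ₗ M.subtype) = K.comap M.subtype := by
    ext x
    exact weightedCoboundaryParam_eq_zero_iff x.2.1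
  have hrn := LinearMap.finrank_range_add_finrank_ker (G ∘ₗ M.subtype)
  rw [LinearMap.range_comp, Submodule.range_subtype, map_weightedCoboundaryParam, hker,
    (Submodule.comapSubtypeEquivOfLe hKM).finrank_eq, Submodule.finrank_prod,
    Submodule.finrank_prod, finrank_top, finrank_bot, finrank_constOnEdges, finrank_constOnEdges,
    Module.finrank_fintype_fun_eq_card] at hrn
  have hcard := Nat.card_congr (Equiv.sumCompl fun a => P a ∧ c a ≠ 0)
  rw [Nat.card_sum, Nat.card_eq_fintype_card (α := {a // ¬ _})] at hcard
  omega

end Dimension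

section Subdivision
variable {V E : Type} {s t : E → V} {𝓔 : Finset E} {φ : SubE 𝓔 → ℕ}

def baseFlow [DecidableEq E] (𝓔 : Finset E) (φ : SubE 𝓔 → ℕ) (e : E) : ℝ :=
  if h : e ∈ 𝓔 then 0 else φ (.inl ⟨e, h⟩)

def FmapLinear [DecidableEq E] (𝓔 : Finset E) : (SubE 𝓔 → ℝ) →ₗ[ℝ] (E → ℝ) where
  toFun := Fmap 𝓔
  map_add' x y := by
    ext e
    by_cases h : e ∈ 𝓔 <;> simp [Fmap, h]
    ring
  map_smul' r x := by
    ext e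
    by_cases h : e ∈ 𝓔 <;> simp [Fmap, h]
    ring

theorem flow_true_eq (w : {e // e ∈ 𝓔})
    (hw : divFlow (subS s t 𝓔) (subT s t 𝓔) φ (.inr w) = -1) :
    φ (.inr (w, true)) = φ (.inr (w, false)) + 1 := by
  have hin : {a : SubE 𝓔 | subT s t 𝓔 a = .inr w} = {.inr (w, false)} := by
    ext (e | ⟨w', _ | _⟩) <;> simp [subT, Prod.ext_iff]
  have hout : {a : SubE 𝓔 | subS s t 𝓔 a = .inr w} = {.inr (w, true)} := by
    ext (e | ⟨w', _ | _⟩) <;> simp [subS, Prod.ext_iff]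
  rw [divFlow, hin, hout, finsum_mem_singleton, finsum_mem_singleton] at hw
  omega

/-- On a subdivided edge `w` with flows `p` and `p + 1` on its halves, the value `y w` is split as
`((p + 1) y w - δ) + (δ - p y w)`, where `δ = h (t w) - h (s w)`. -/
theorem map_Fmap_weightedCoboundaries [DecidableEq E]
    (hφ : ∀ w, φ (.inr (w, true)) = φ (.inr (w, false)) + 1) :
    (weightedCoboundaries (subS s t 𝓔) (subT s t 𝓔) (fun _ => True) (fun a => φ a)).map
      (FmapLinear 𝓔) = weightedCoboundaries s t (· ∉ 𝓔) (baseFlow 𝓔 φ) := by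
  ext y
  constructor
  · rintro ⟨x, ⟨f, hf⟩, rfl⟩
    refine ⟨f ∘ Sum.inl, fun e he => ?_⟩
    simpa [baseFlow, he, FmapLinear, Fmap, subS, subT] using hf (.inl ⟨e, he⟩) trivial
  · rintro ⟨h, hy⟩
    let δ : {e // e ∈ 𝓔} → ℝ := fun w => h (t w) - h (s w)
    let p : {e // e ∈ 𝓔} → ℝ := fun w => φ (.inr (w, false))
    let x : SubE 𝓔 → ℝ := Sum.elim (fun e => y e) fun wb =>
      if wb.2 then δ wb.1 - p wb.1 * y wb.1 else (p wb.1 + 1) * y wb.1 - δ wb.1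
    refine ⟨x, ⟨Sum.elim h fun w => h (s w) + p w * x (.inr (w, false)), ?_⟩, ?_⟩
    · rintro (e | ⟨w, _ | _⟩) -
      · simpa [baseFlow, e.2, x, subS, subT] using hy e e.2
      · simp [x, subS, subT, p]
      · simp [x, subS, subT, p, δ, hφ]
        ring
    · ext e
      by_cases he : e ∈ 𝓔 <;> simp [FmapLinear, Fmap, he, x]
      ring

theorem span_Kcone [Fintype V] [Fintype E] [DecidableEq E]
    (hac : FlowAcyclic (subS s t 𝓔) (subT s t 𝓔) φ)
    (hdiv : ∀ w, divFlow (subS s t 𝓔) (subT s t 𝓔) φ (.inr w) = -1) :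
    Submodule.span ℝ (Kcone s t 𝓔 φ) = weightedCoboundaries s t (· ∉ 𝓔) (baseFlow 𝓔 φ) := by
  rw [Kcone, show Fmap 𝓔 = FmapLinear 𝓔 from rfl, Submodule.span_image, hac.span_Ccone,
    map_Fmap_weightedCoboundaries fun w => flow_true_eq w (hdiv w)]

end Subdivision

section Combinatorics
variable {V E : Type} {s t : E → V} {𝓔 : Finset E} {φ : SubE 𝓔 → ℕ}

/-- `e ∈ 𝓕`. -/
abbrev IsFlowEdge (𝓔 : Finset E) (φ : SubE 𝓔 → ℕ) (e : E) : Prop :=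
  ∃ h : e ∉ 𝓔, φ (.inl ⟨e, h⟩) ≠ 0

/-- `e ∈ E ∖ (𝓔 ∪ 𝓕)`. -/
abbrev IsZeroEdge (𝓔 : Finset E) (φ : SubE 𝓔 → ℕ) (e : E) : Prop :=
  e ∉ 𝓔 ∧ ∀ h : e ∉ 𝓔, φ (.inl ⟨e, h⟩) = 0

theorem IsFlowEdge.ne (hac : FlowAcyclic (subS s t 𝓔) (subT s t 𝓔) φ) {e : E}
    (he : IsFlowEdge 𝓔 φ e) : s e ≠ t e :=
  fun h => hac.ne_of_ne_zero he.2 (congrArg Sum.inl h)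

theorem ne_of_mem_subdivided (hac : FlowAcyclic (subS s t 𝓔) (subT s t 𝓔) φ)
    (hdiv : ∀ w, divFlow (subS s t 𝓔) (subT s t 𝓔) φ (.inr w) = -1) (w : {e // e ∈ 𝓔}) :
    s w ≠ t w := fun h =>
  hac.not_reverse (a := .inr (w, true)) (by rw [flow_true_eq w (hdiv w)]; omega)
    (.inr (w, false)) ⟨congrArg Sum.inl h, rfl⟩

theorem sym2_ne_of_isFlowEdge (hac : FlowAcyclic (subS s t 𝓔) (subT s t 𝓔) φ) {e e' : E}
    (he : IsFlowEdge 𝓔 φ e) (he' : IsZeroEdge 𝓔 φ e') : s(s e, t e) ≠ s(s e', t e') := fun h =>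
  hac.sym2_ne (a := .inl ⟨e, he.1⟩) (b := .inl ⟨e', he'.1⟩) he.2 (he'.2 he'.1) <| by
    simpa [subS, subT] using h

theorem forall_isZeroEdge_of_card_eq_one (hac : FlowAcyclic (subS s t 𝓔) (subT s t 𝓔) φ)
    (hdiv : ∀ w, divFlow (subS s t 𝓔) (subT s t 𝓔) φ (.inr w) = -1) (hV : Nat.card V = 1)
    (e : E) : IsZeroEdge 𝓔 φ e := by
  have : Subsingleton V := (Nat.card_eq_one_iff_unique.mp hV).1
  refine ⟨fun he => ne_of_mem_subdivided hac hdiv ⟨e, he⟩ (Subsingleton.elim _ _), fun h => ?_⟩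
  by_contra hφ
  exact IsFlowEdge.ne hac ⟨h, hφ⟩ (Subsingleton.elim _ _)

theorem not_isFlowEdge_of_card_eq_two (hac : FlowAcyclic (subS s t 𝓔) (subT s t 𝓔) φ)
    (hV : Nat.card V = 2) {e₀ : E} (he₀ : IsZeroEdge 𝓔 φ e₀) (hne : s e₀ ≠ t e₀) (e : E) :
    ¬ IsFlowEdge 𝓔 φ e := fun he =>
  sym2_ne_of_isFlowEdge hac he he₀ (sym2_eq_of_card_eq_two hV (he.ne hac) hne)

theorem b0_isZeroEdge_of_card_eq_zero [Finite E] (h : Nat.card {e // IsZeroEdge 𝓔 φ e} = 0) :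
    b0 (fun e : {e // IsZeroEdge 𝓔 φ e} => s e.1) (fun e => t e.1) = Nat.card V :=
  have : IsEmpty {e // IsZeroEdge 𝓔 φ e} := Finite.card_eq_zero_iff.mp h
  b0_of_isEmpty _ _

theorem card_eq_of_forall_isZeroEdge
    (hnd : GraphConnected (fun e : {e // e ∉ 𝓔} => s e.1) (fun e : {e // e ∉ 𝓔} => t e.1))
    (h : ∀ e, IsZeroEdge 𝓔 φ e) (hE : Nat.card E = 1) :
    (Nat.card V = 2 ∧ (∀ e, s e ≠ t e) ∧ Nat.card E = 1 ∧ ∀ a, φ a = 0) ∨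
      (Nat.card V = 1 ∧ Nat.card E = 1) := by
  obtain ⟨_, ⟨e₀⟩⟩ := Nat.card_eq_one_iff_unique.mp hE
  have hends := forall_eq_or_eq_of_b0_eq_one hnd.2 (e₀ := ⟨e₀, (h e₀).1⟩)
    fun _ => Subtype.ext (Subsingleton.elim _ _)
  by_cases hloop : s e₀ = t e₀
  · have hall (v : V) : v = s e₀ := (hends v).elim id (·.trans hloop.symm)
    exact .inr ⟨Nat.card_eq_one_iff_unique.mpr
      ⟨⟨fun v w => (hall v).trans (hall w).symm⟩, ⟨s e₀⟩⟩, hE⟩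
  · refine .inl ⟨Nat.card_eq_two_of_forall_eq_or_eq hloop hends,
      fun e => Subsingleton.elim e₀ e ▸ hloop, hE, ?_⟩
    rintro (⟨e, he⟩ | ⟨w, -⟩)
    · exact (h e).2 he
    · exact absurd w.2 (h w).1

variable [Fintype V] [Fintype E] [DecidableEq E]

theorem card_isFlowEdge_add_card_add_card_isZeroEdge :
    Nat.card {e // IsFlowEdge 𝓔 φ e} + 𝓔.card + Nat.card {e // IsZeroEdge 𝓔 φ e} = Nat.card E := by
  classical
  have hone (e : E) : ((if IsFlowEdge 𝓔 φ e then 1 else 0) + (if e ∈ 𝓔 then 1 else 0)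
      + if IsZeroEdge 𝓔 φ e then 1 else 0) = 1 := by
    by_cases he : e ∈ 𝓔
    · simp [he]
    · by_cases hφ : φ (.inl ⟨e, he⟩) = 0 <;> simp [he, hφ, IsFlowEdge, IsZeroEdge]
  simp only [Nat.card_eq_fintype_card, Fintype.card_subtype, Finset.card_filter]
  have h𝓔 : 𝓔.card = ∑ e, if e ∈ 𝓔 then 1 else 0 := by simp
  rw [h𝓔, ← Finset.sum_add_distrib, ← Finset.sum_add_distrib,
    Finset.sum_congr rfl fun e _ => hone e]
  simp

theorem finrank_span_Kcone_add
    (hnd : GraphConnected (fun e : {e // e ∉ 𝓔} => s e.1) (fun e : {e // e ∉ 𝓔} => t e.1))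
    (hac : FlowAcyclic (subS s t 𝓔) (subT s t 𝓔) φ)
    (hdiv : ∀ w, divFlow (subS s t 𝓔) (subT s t 𝓔) φ (.inr w) = -1) :
    finrank ℝ (Submodule.span ℝ (Kcone s t 𝓔 φ)) + 1 + Nat.card {e // IsFlowEdge 𝓔 φ e}
      = Nat.card E + b0 (fun e : {e // IsZeroEdge 𝓔 φ e} => s e.1) (fun e => t e.1) := by
  have h := finrank_weightedCoboundaries s t (· ∉ 𝓔) (baseFlow 𝓔 φ)
  have hflow (e : E) : e ∉ 𝓔 ∧ baseFlow 𝓔 φ e ≠ 0 ↔ IsFlowEdge 𝓔 φ e := by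
    by_cases he : e ∈ 𝓔 <;> simp [baseFlow, he, IsFlowEdge]
  have hzero (e : E) : e ∉ 𝓔 ∧ baseFlow 𝓔 φ e = 0 ↔ IsZeroEdge 𝓔 φ e := by
    by_cases he : e ∈ 𝓔 <;> simp [baseFlow, he, IsZeroEdge]
  rw [span_Kcone hac hdiv, ← Nat.card_congr (Equiv.subtypeEquivRight hflow), ← b0_congr s t hzero]
  have := hnd.2
  omega

theorem finrank_span_Kcone_add_one
    (hnd : GraphConnected (fun e : {e // e ∉ 𝓔} => s e.1) (fun e : {e // e ∉ 𝓔} => t e.1))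
    (hac : FlowAcyclic (subS s t 𝓔) (subT s t 𝓔) φ)
    (hdiv : ∀ w, divFlow (subS s t 𝓔) (subT s t 𝓔) φ (.inr w) = -1) :
    finrank ℝ (Submodule.span ℝ (Kcone s t 𝓔 φ)) + 1 = 𝓔.card + Nat.card {e // IsZeroEdge 𝓔 φ e}
      + b0 (fun e : {e // IsZeroEdge 𝓔 φ e} => s e.1) (fun e => t e.1) := by
  have := finrank_span_Kcone_add hnd hac hdiv
  have := card_isFlowEdge_add_card_add_card_isZeroEdge (𝓔 := 𝓔) (φ := φ)
  omega

theorem finrank_span_Kcone_of_forall_isZeroEdge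
    (hnd : GraphConnected (fun e : {e // e ∉ 𝓔} => s e.1) (fun e : {e // e ∉ 𝓔} => t e.1))
    (hac : FlowAcyclic (subS s t 𝓔) (subT s t 𝓔) φ)
    (hdiv : ∀ w, divFlow (subS s t 𝓔) (subT s t 𝓔) φ (.inr w) = -1)
    (h : ∀ e, IsZeroEdge 𝓔 φ e) : finrank ℝ (Submodule.span ℝ (Kcone s t 𝓔 φ)) = Nat.card E := by
  have hdim := finrank_span_Kcone_add_one hnd hac hdiv
  have h𝓔 : 𝓔.card = 0 :=
    Finset.card_eq_zero.mpr (Finset.eq_empty_of_forall_notMem fun e => (h e).1)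
  rw [Nat.card_congr (Equiv.subtypeUnivEquiv h), h𝓔,
    b0_congr s t fun e => ⟨fun he => he.1, fun _ => h e⟩, hnd.2] at hdim
  omega

theorem finrank_span_Kcone_add_one_of_forall_isFlowEdge
    (hnd : GraphConnected (fun e : {e // e ∉ 𝓔} => s e.1) (fun e : {e // e ∉ 𝓔} => t e.1))
    (hac : FlowAcyclic (subS s t 𝓔) (subT s t 𝓔) φ)
    (hdiv : ∀ w, divFlow (subS s t 𝓔) (subT s t 𝓔) φ (.inr w) = -1)
    (h : ∀ e, IsFlowEdge 𝓔 φ e) :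
    finrank ℝ (Submodule.span ℝ (Kcone s t 𝓔 φ)) + 1 = Nat.card V := by
  have hdim := finrank_span_Kcone_add_one hnd hac hdiv
  have h𝓔 : 𝓔.card = 0 :=
    Finset.card_eq_zero.mpr (Finset.eq_empty_of_forall_notMem fun e => (h e).1)
  have hZ : Nat.card {e // IsZeroEdge 𝓔 φ e} = 0 :=
    Finite.card_eq_zero_iff.mpr ⟨fun e => (h e).2 (e.2.2 _)⟩
  rw [h𝓔, hZ, b0_isZeroEdge_of_card_eq_zero hZ] at hdim
  omega

theorem finrank_span_Kcone_eq_zero_iff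
    (hnd : GraphConnected (fun e : {e // e ∉ 𝓔} => s e.1) (fun e : {e // e ∉ 𝓔} => t e.1))
    (hac : FlowAcyclic (subS s t 𝓔) (subT s t 𝓔) φ)
    (hdiv : ∀ w, divFlow (subS s t 𝓔) (subT s t 𝓔) φ (.inr w) = -1) :
    finrank ℝ (Submodule.span ℝ (Kcone s t 𝓔 φ)) = 0 ↔ Nat.card V = 1 ∧ IsEmpty E := by
  constructor
  · intro h0
    have hdim := finrank_span_Kcone_add_one hnd hac hdiv
    have : Nonempty V := hnd.1
    have hq := one_le_b0 (fun e : {e // IsZeroEdge 𝓔 φ e} => s e.1) (fun e => t e.1)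
    have hZ : Nat.card {e // IsZeroEdge 𝓔 φ e} = 0 := by omega
    have hV : Nat.card V = 1 := by
      have := b0_isZeroEdge_of_card_eq_zero (s := s) (t := t) hZ
      omega
    have : IsEmpty {e // IsZeroEdge 𝓔 φ e} := Finite.card_eq_zero_iff.mp hZ
    exact ⟨hV, ⟨fun e => isEmptyElim
      (⟨e, forall_isZeroEdge_of_card_eq_one hac hdiv hV e⟩ : {e // IsZeroEdge 𝓔 φ e})⟩⟩
  · rintro ⟨hV, hE⟩
    rw [finrank_span_Kcone_of_forall_isZeroEdge hnd hac hdiv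
      (forall_isZeroEdge_of_card_eq_one hac hdiv hV)]
    exact Nat.card_of_isEmpty

theorem eq_empty_and_card_eq_two_of_finrank_span_Kcone_eq_one
    (hnd : GraphConnected (fun e : {e // e ∉ 𝓔} => s e.1) (fun e : {e // e ∉ 𝓔} => t e.1))
    (hac : FlowAcyclic (subS s t 𝓔) (subT s t 𝓔) φ)
    (hdiv : ∀ w, divFlow (subS s t 𝓔) (subT s t 𝓔) φ (.inr w) = -1)
    (hn : finrank ℝ (Submodule.span ℝ (Kcone s t 𝓔 φ)) = 1)
    (hZ : Nat.card {e // IsZeroEdge 𝓔 φ e} = 0) :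
    𝓔 = ∅ ∧ Nat.card V = 2 ∧ (∀ e, s e ≠ t e) ∧ ∃ a, φ a ≠ 0 := by
  have hdim := finrank_span_Kcone_add_one hnd hac hdiv
  rw [hZ, b0_isZeroEdge_of_card_eq_zero hZ, hn] at hdim
  have : Nonempty V := hnd.1
  have hV : Nat.card V = 2 := by
    by_contra hV
    have hV1 : Nat.card V = 1 := by have := Nat.card_pos (α := V); omega
    have hall := forall_isZeroEdge_of_card_eq_one hac hdiv hV1
    have := finrank_span_Kcone_of_forall_isZeroEdge hnd hac hdiv hall
    rw [← Nat.card_congr (Equiv.subtypeUnivEquiv hall), hZ] at this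
    omega
  have h𝓔 : 𝓔 = ∅ := Finset.card_eq_zero.mp (by omega)
  have hflow (e : E) : IsFlowEdge 𝓔 φ e :=
    ⟨by simp [h𝓔], fun h0 => (Finite.card_eq_zero_iff.mp hZ).false ⟨e, by simp [h𝓔], fun _ => h0⟩⟩
  obtain ⟨e⟩ : Nonempty E := by
    by_contra hE
    have : IsEmpty E := not_nonempty_iff.mp hE
    have := hnd.2
    rw [b0_of_isEmpty] at this
    omega
  exact ⟨h𝓔, hV, fun e => (hflow e).ne hac, _, (hflow e).2⟩

theorem forall_isZeroEdge_of_finrank_span_Kcone_eq_one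
    (hnd : GraphConnected (fun e : {e // e ∉ 𝓔} => s e.1) (fun e : {e // e ∉ 𝓔} => t e.1))
    (hac : FlowAcyclic (subS s t 𝓔) (subT s t 𝓔) φ)
    (hdiv : ∀ w, divFlow (subS s t 𝓔) (subT s t 𝓔) φ (.inr w) = -1)
    (hn : finrank ℝ (Submodule.span ℝ (Kcone s t 𝓔 φ)) = 1)
    (hZ : Nat.card {e // IsZeroEdge 𝓔 φ e} = 1) (e : E) : IsZeroEdge 𝓔 φ e := by
  have hdim := finrank_span_Kcone_add_one hnd hac hdiv
  have : Nonempty V := hnd.1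
  have := one_le_b0 (fun e : {e // IsZeroEdge 𝓔 φ e} => s e.1) (fun e => t e.1)
  have h𝓔 : 𝓔 = ∅ := Finset.card_eq_zero.mp (by omega)
  obtain ⟨_, ⟨e₀, he₀⟩⟩ := Nat.card_eq_one_iff_unique.mp hZ
  have hq : b0 (fun e : {e // IsZeroEdge 𝓔 φ e} => s e.1) (fun e => t e.1) = 1 := by omega
  have hends := forall_eq_or_eq_of_b0_eq_one hq (e₀ := ⟨e₀, he₀⟩) fun _ => Subsingleton.elim _ _
  refine ⟨by simp [h𝓔], fun he => ?_⟩
  by_contra hφ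
  have hne := IsFlowEdge.ne hac ⟨he, hφ⟩
  have hne₀ : s e₀ ≠ t e₀ := fun h0 => hne <| by
    rcases hends (s e) with h | h <;> rcases hends (t e) with h' | h' <;> simp_all
  exact not_isFlowEdge_of_card_eq_two hac (Nat.card_eq_two_of_forall_eq_or_eq hne₀ hends) he₀ hne₀
    e ⟨he, hφ⟩

theorem finrank_span_Kcone_eq_one_iff
    (hnd : GraphConnected (fun e : {e // e ∉ 𝓔} => s e.1) (fun e : {e // e ∉ 𝓔} => t e.1))
    (hac : FlowAcyclic (subS s t 𝓔) (subT s t 𝓔) φ)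
    (hdiv : ∀ w, divFlow (subS s t 𝓔) (subT s t 𝓔) φ (.inr w) = -1) :
    finrank ℝ (Submodule.span ℝ (Kcone s t 𝓔 φ)) = 1 ↔
      𝓔 = ∅ ∧
        ((Nat.card V = 2 ∧ (∀ e, s e ≠ t e) ∧ ∃ a, φ a ≠ 0) ∨
         (Nat.card V = 2 ∧ (∀ e, s e ≠ t e) ∧ Nat.card E = 1 ∧ ∀ a, φ a = 0) ∨
         (Nat.card V = 1 ∧ Nat.card E = 1)) := by
  constructor
  · intro hn
    have hdim := finrank_span_Kcone_add_one hnd hac hdiv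
    have : Nonempty V := hnd.1
    have := one_le_b0 (fun e : {e // IsZeroEdge 𝓔 φ e} => s e.1) (fun e => t e.1)
    rcases (by omega : Nat.card {e // IsZeroEdge 𝓔 φ e} = 0 ∨ Nat.card {e // IsZeroEdge 𝓔 φ e} = 1)
      with hZ | hZ
    · obtain ⟨h𝓔, hflow⟩ := eq_empty_and_card_eq_two_of_finrank_span_Kcone_eq_one hnd hac hdiv hn hZ
      exact ⟨h𝓔, .inl hflow⟩
    · have hall := forall_isZeroEdge_of_finrank_span_Kcone_eq_one hnd hac hdiv hn hZ
      rw [finrank_span_Kcone_of_forall_isZeroEdge hnd hac hdiv hall] at hn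
      exact ⟨Finset.eq_empty_of_forall_notMem fun e => (hall e).1,
        .inr (card_eq_of_forall_isZeroEdge hnd hall hn)⟩
  · rintro ⟨h𝓔, ⟨hV, hloop, a, ha⟩ | ⟨hV, -, hE, hφ⟩ | ⟨hV, hE⟩⟩
    · obtain ⟨e₁, he₁⟩ | ⟨w, -⟩ := a
      · have hflow (e : E) : IsFlowEdge 𝓔 φ e :=
          ⟨by simp [h𝓔], fun hφ => not_isFlowEdge_of_card_eq_two hac hV
            ⟨by simp [h𝓔], fun _ => hφ⟩ (hloop e) e₁ ⟨he₁, ha⟩⟩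
        have := finrank_span_Kcone_add_one_of_forall_isFlowEdge hnd hac hdiv hflow
        omega
      · exact absurd w.2 (by simp [h𝓔])
    · rw [finrank_span_Kcone_of_forall_isZeroEdge hnd hac hdiv
        fun e => ⟨by simp [h𝓔], fun _ => hφ _⟩, hE]
    · rw [finrank_span_Kcone_of_forall_isZeroEdge hnd hac hdiv
        (forall_isZeroEdge_of_card_eq_one hac hdiv hV), hE]

end Combinatorics

theorem Kcone_dim_general (V E : Type) [Fintype V] [Fintype E] [DecidableEq E] (s t : E → V)
    (𝓔 : Finset E)
    (hnd : GraphConnected (fun e : {e // e ∉ 𝓔} => s e.1) (fun e : {e // e ∉ 𝓔} => t e.1))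
    (φ : SubE 𝓔 → ℕ)
    (hac : FlowAcyclic (subS s t 𝓔) (subT s t 𝓔) φ)
    (hdiv : ∀ w : {e // e ∈ 𝓔}, divFlow (subS s t 𝓔) (subT s t 𝓔) φ (Sum.inr w) = -1) :
    ((Module.finrank ℝ (Submodule.span ℝ (Kcone s t 𝓔 φ)) : ℤ)
        = (Nat.card E : ℤ)
          - (Nat.card {e : E // ∃ h : e ∉ 𝓔, φ (Sum.inl ⟨e, h⟩) ≠ 0} : ℤ)
          + (b0 (fun e : {e : E // e ∉ 𝓔 ∧ ∀ h : e ∉ 𝓔, φ (Sum.inl ⟨e, h⟩) = 0} => s e.1)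
                (fun e => t e.1) : ℤ) - 1) ∧
    (Module.finrank ℝ (Submodule.span ℝ (Kcone s t 𝓔 φ)) = 0 ↔
      Nat.card V = 1 ∧ IsEmpty E) ∧
    (Module.finrank ℝ (Submodule.span ℝ (Kcone s t 𝓔 φ)) = 1 ↔
      𝓔 = ∅ ∧
        ((Nat.card V = 2 ∧ (∀ e, s e ≠ t e) ∧ ∃ a, φ a ≠ 0) ∨
         (Nat.card V = 2 ∧ (∀ e, s e ≠ t e) ∧ Nat.card E = 1 ∧ ∀ a, φ a = 0) ∨
         (Nat.card V = 1 ∧ Nat.card E = 1))) := by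
  refine ⟨?_, finrank_span_Kcone_eq_zero_iff hnd hac hdiv,
    finrank_span_Kcone_eq_one_iff hnd hac hdiv⟩
  have := finrank_span_Kcone_add hnd hac hdiv
  unfold IsFlowEdge IsZeroEdge at this
  omega

/-- Proposition 5.1 (Prop. `prop:Kdim`): the dimension formula for `K_{Γ,𝓔,φ}` and the
characterization of the cases of dimension `0` and `1`. Here
`𝓕 = {e ∈ E∖𝓔 : φ(e) ≠ 0}` and `Γ_{𝓔∪𝓕}` is the graph `(V, E∖(𝓔∪𝓕))`. -/
theorem Kcone_dim (V E : Type) [Fintype V] [Fintype E] [DecidableEq E] (s t : E → V)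
    (hconn : GraphConnected s t) (𝓔 : Finset E)
    (hnd : GraphConnected (fun e : {e // e ∉ 𝓔} => s e.1) (fun e : {e // e ∉ 𝓔} => t e.1))
    (φ : SubE 𝓔 → ℕ)
    (hac : FlowAcyclic (subS s t 𝓔) (subT s t 𝓔) φ)
    (hdiv : ∀ w : {e // e ∈ 𝓔}, divFlow (subS s t 𝓔) (subT s t 𝓔) φ (Sum.inr w) = -1) :
    ((Module.finrank ℝ (Submodule.span ℝ (Kcone s t 𝓔 φ)) : ℤ)
        = (Nat.card E : ℤ)
          - (Nat.card {e : E // ∃ h : e ∉ 𝓔, φ (Sum.inl ⟨e, h⟩) ≠ 0} : ℤ)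
          + (b0 (fun e : {e : E // e ∉ 𝓔 ∧ ∀ h : e ∉ 𝓔, φ (Sum.inl ⟨e, h⟩) = 0} => s e.1)
                (fun e => t e.1) : ℤ) - 1) ∧
    (Module.finrank ℝ (Submodule.span ℝ (Kcone s t 𝓔 φ)) = 0 ↔
      Nat.card V = 1 ∧ IsEmpty E) ∧
    (Module.finrank ℝ (Submodule.span ℝ (Kcone s t 𝓔 φ)) = 1 ↔
      𝓔 = ∅ ∧
        ((Nat.card V = 2 ∧ (∀ e, s e ≠ t e) ∧ ∃ a, φ a ≠ 0) ∨
         (Nat.card V = 2 ∧ (∀ e, s e ≠ t e) ∧ Nat.card E = 1 ∧ ∀ a, φ a = 0) ∨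
         (Nat.card V = 1 ∧ Nat.card E = 1))) :=
  Kcone_dim_general V E s t 𝓔 hnd φ hac hdiv

end
end

section
/- Let k be a field, n a natural number, S a finitely generated submonoid of ℤⁿ, u* ∈ S, and let T be the submonoid of ℤⁿ generated by S together with −u*. Let λ : k[S] → k[T] be the ring homomorphism of monoid algebras induced by the inclusion S ⊆ T. Then for every u₀ ∈ T: (a) λ⁻¹(⟨χ^{u₀}⟩) = ⟨χ^v : v ∈ S and v − u₀ ∈ T⟩, so in particular λ⁻¹(⟨χ^{u₀}⟩) is a monomial ideal of k[S]; and (b) for u ∈ S, the monomial χ^u lies in λ⁻¹(⟨χ^{u₀}⟩) if and only if u − u₀ ∈ T. -/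
/-!
The inclusion `S → T` is injective, so `λ` maps the support of `g ∈ k[S]` bijectively onto
the support of `λ g`. A polynomial lies in the monomial ideal `⟨χ^{u₀}⟩` of `k[T]` exactly when
every exponent `w` in its support has the form `d + u₀` with `d ∈ T`, i.e. `w - u₀ ∈ T`; hence
`g ∈ λ⁻¹⟨χ^{u₀}⟩` iff its support lies in `{w ∈ S | w - u₀ ∈ T}`. That set is closed under
adding elements of `S`, so the monomial ideal of `k[S]` it generates is described by the same
support condition.
-/

theorem AddSubmonoid.exists_add_eq_iff_sub_mem {G : Type*} [AddGroup G] {T : AddSubmonoid G}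
    (w x : T) : (∃ d : T, w = d + x) ↔ (w : G) - x ∈ T := by
  refine ⟨?_, fun h => ⟨⟨_, h⟩, Subtype.ext (sub_add_cancel _ _).symm⟩⟩
  rintro ⟨d, rfl⟩
  simp [d.2]

namespace AddMonoidAlgebra

variable {k : Type*} [Semiring k]

theorem mem_ideal_span_of'_image_iff_of_add_mem {M : Type*} [AddMonoid M] {s : Set M}
    (hs : ∀ d m, m ∈ s → d + m ∈ s) {x : AddMonoidAlgebra k M} :
    x ∈ Ideal.span (of' k M '' s) ↔ ∀ m ∈ x.coeff.support, m ∈ s := by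
  rw [mem_ideal_span_of'_image]
  refine forall₂_congr fun m _ => ⟨?_, fun hm => ⟨m, hm, 0, (zero_add m).symm⟩⟩
  rintro ⟨m', hm', d, rfl⟩
  exact hs d m' hm'

theorem mapDomain_mem_ideal_span_single_iff {M N : Type*} [AddMonoid M] [AddMonoid N]
    {f : M →+ N} (hf : Function.Injective f) (x : N) (g : AddMonoidAlgebra k M) :
    mapDomainRingHom k f g ∈ Ideal.span {single x 1} ↔
      ∀ m ∈ g.coeff.support, ∃ d, f m = d + x := by
  classical
  rw [← of'_apply, ← Set.image_singleton, mem_ideal_span_of'_image]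
  change (∀ m ∈ (Finsupp.mapDomain f g.coeff).support, _) ↔ _
  simp [Finsupp.mapDomain_support_of_injective hf]

section Inclusion

variable {G : Type*} [AddGroup G] {S T : AddSubmonoid G} (hle : S ≤ T)

theorem mem_comap_ideal_span_single_iff (x : T) (g : AddMonoidAlgebra k S) :
    g ∈ (Ideal.span {single x 1}).comap (mapDomainRingHom k (AddSubmonoid.inclusion hle)) ↔
      ∀ w ∈ g.coeff.support, (w : G) - x ∈ T := by
  rw [Ideal.mem_comap, mapDomain_mem_ideal_span_single_iff (AddSubmonoid.inclusion_injective hle)]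
  exact forall₂_congr fun w _ => AddSubmonoid.exists_add_eq_iff_sub_mem _ x

theorem comap_ideal_span_single_eq_span_of'_image (x : T) :
    (Ideal.span {single x (1 : k)}).comap (mapDomainRingHom k (AddSubmonoid.inclusion hle)) =
      Ideal.span (of' k S '' {w | (w : G) - x ∈ T}) := by
  have hclosed : ∀ d w : S, (w : G) - x ∈ T → ((d + w : S) : G) - x ∈ T := fun d w hw => by
    simpa only [AddSubmonoid.coe_add, add_sub_assoc] using T.add_mem (hle d.2) hw
  ext g
  rw [mem_comap_ideal_span_single_iff]
  exact (mem_ideal_span_of'_image_iff_of_add_mem (s := {w : S | (w : G) - x ∈ T}) hclosed).symm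

theorem single_mem_comap_ideal_span_single_iff [Nontrivial k] (x : T) (w : S) :
    single w (1 : k) ∈ (Ideal.span {single x 1}).comap
        (mapDomainRingHom k (AddSubmonoid.inclusion hle)) ↔ (w : G) - x ∈ T := by
  classical
  rw [mem_comap_ideal_span_single_iff, coeff_single, Finsupp.support_single _ one_ne_zero]
  simp

end Inclusion

end AddMonoidAlgebra

theorem comap_span_single_eq_general (k : Type) [Field k] (n : ℕ)
    (S T : AddSubmonoid (Fin n → ℤ))
    (hle : S ≤ T)
    (lam : AddMonoidAlgebra k S →+* AddMonoidAlgebra k T)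
    (hlam : lam = AddMonoidAlgebra.mapDomainRingHom k (AddSubmonoid.inclusion hle))
    (u₀ : Fin n → ℤ) (hu₀ : u₀ ∈ T) :
    Ideal.comap lam (Ideal.span {AddMonoidAlgebra.single (⟨u₀, hu₀⟩ : T) (1 : k)})
        = Ideal.span {f : AddMonoidAlgebra k S |
            ∃ (v : Fin n → ℤ) (hv : v ∈ S), v - u₀ ∈ T ∧
              f = AddMonoidAlgebra.single (⟨v, hv⟩ : S) (1 : k)} ∧
    ∀ (u : Fin n → ℤ) (hu : u ∈ S),
      (AddMonoidAlgebra.single (⟨u, hu⟩ : S) (1 : k) ∈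
          Ideal.comap lam (Ideal.span {AddMonoidAlgebra.single (⟨u₀, hu₀⟩ : T) (1 : k)})
        ↔ u - u₀ ∈ T) := by
  subst hlam
  refine ⟨?_, fun u hu =>
    AddMonoidAlgebra.single_mem_comap_ideal_span_single_iff hle _ ⟨u, hu⟩⟩
  rw [AddMonoidAlgebra.comap_ideal_span_single_eq_span_of'_image]
  congr 1
  ext f
  constructor
  · rintro ⟨⟨v, hv⟩, hvT, rfl⟩
    exact ⟨v, hv, hvT, rfl⟩
  · rintro ⟨v, hv, hvT, rfl⟩
    exact ⟨⟨v, hv⟩, hvT, rfl⟩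

/-- Proposition 4.8 (Prop. `prop:hface`): let `S` be a finitely generated submonoid of
`ℤⁿ`, `u* ∈ S`, and `T` the submonoid generated by `S` and `−u*` (this encodes the
localization homomorphism `λ : A_σ → A_τ` to a face `τ ≺ σ`, via
`S_τ = S_σ + ℤ·u*`). Then for every `u₀ ∈ T`:
(a) `λ⁻¹(⟨χ^{u₀}⟩) = ⟨χ^v : v ∈ S, v − u₀ ∈ T⟩`, a monomial ideal; and
(b) for `u ∈ S`, `χ^u ∈ λ⁻¹(⟨χ^{u₀}⟩)` if and only if `u − u₀ ∈ T`. -/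
theorem comap_span_single_eq (k : Type) [Field k] (n : ℕ)
    (S T : AddSubmonoid (Fin n → ℤ)) (hfg : S.FG)
    (ustar : Fin n → ℤ) (hustar : ustar ∈ S)
    (hT : T = S ⊔ AddSubmonoid.closure {-ustar}) (hle : S ≤ T)
    (lam : AddMonoidAlgebra k S →+* AddMonoidAlgebra k T)
    (hlam : lam = AddMonoidAlgebra.mapDomainRingHom k (AddSubmonoid.inclusion hle))
    (u₀ : Fin n → ℤ) (hu₀ : u₀ ∈ T) :
    Ideal.comap lam (Ideal.span {AddMonoidAlgebra.single (⟨u₀, hu₀⟩ : T) (1 : k)})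
        = Ideal.span {f : AddMonoidAlgebra k S |
            ∃ (v : Fin n → ℤ) (hv : v ∈ S), v - u₀ ∈ T ∧
              f = AddMonoidAlgebra.single (⟨v, hv⟩ : S) (1 : k)} ∧
    ∀ (u : Fin n → ℤ) (hu : u ∈ S),
      (AddMonoidAlgebra.single (⟨u, hu⟩ : S) (1 : k) ∈
          Ideal.comap lam (Ideal.span {AddMonoidAlgebra.single (⟨u₀, hu₀⟩ : T) (1 : k)})
        ↔ u - u₀ ∈ T) :=
  comap_span_single_eq_general k n S T hle lam hlam u₀ hu₀
end

section
/- Let k be a field and t, n positive integers; set m := t·n. Let A := k[x,y,u]/⟨x y − u^t⟩ be the quotient of the polynomial ring in three variables over k by the principal ideal generated by x y − u^t, and let I := ⟨y, u⟩ be the ideal of A generated by the classes of y and u. Then I is a prime ideal, and the m-th symbolic power of I equals the principal ideal ⟨y^n⟩; that is, the preimage under the localization map A → A_I of the ideal (I·A_I)^m equals the ideal of A generated by y^n. -/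
noncomputable section

/-- The ideal `⟨x y − u^t⟩` of `k[x,y,u]` (with `x, y, u` the variables `X 0, X 1, X 2`). -/
def relId (k : Type) [Field k] (t : ℕ) : Ideal (MvPolynomial (Fin 3) k) :=
  Ideal.span {MvPolynomial.X 0 * MvPolynomial.X 1 - MvPolynomial.X 2 ^ t}

/-- The ring `A = k[x,y,u]/⟨x y − u^t⟩`. -/
abbrev Aring (k : Type) [Field k] (t : ℕ) : Type :=
  MvPolynomial (Fin 3) k ⧸ relId k t

/-- The ideal `I = ⟨y, u⟩` of `A`. -/
def Iyu (k : Type) [Field k] (t : ℕ) : Ideal (Aring k t) :=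
  Ideal.span {Ideal.Quotient.mk (relId k t) (MvPolynomial.X 1),
    Ideal.Quotient.mk (relId k t) (MvPolynomial.X 2)}

/-!
Parametrize `A` inside `k[x,x⁻¹][u]` by `φ : x ↦ x, y ↦ x⁻¹ u^t, u ↦ u`. Modulo `y`, every
element of `A` is a polynomial in `x` and `u`, on which the parametrization is the inclusion
`k[x][u] ⊆ k[x,x⁻¹][u]`; hence for `j ≤ t`, `u^j ∣ φ z` forces `z ∈ ⟨y, u^j⟩`. For `j = 1` this
identifies `I` with the preimage of the prime `⟨u⟩`, so `I` is prime and `u ∤ φ s` for `s ∉ I`,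
which turns `s z ∈ I^{tn}` into `u^{tn} ∣ φ z`. For `j = t`, as `u^t = x y`, one factor `y` splits
off for every `u^t`, so `u^{tn} ∣ φ z` forces `z ∈ ⟨y^n⟩`. Conversely `x ∉ I` and
`x^n y^n = u^{tn}`.
-/

open Polynomial
open LaurentPolynomial (T)
open scoped LaurentPolynomial

theorem Prime.pow_dvd_of_mul_mem_pow_comap_span {R S : Type*} [CommRing R] [CommRing S]
    [IsDomain S] (f : R →+* S) {p : S} (hp : Prime p) {s z : R} {m : ℕ} (hs : ¬p ∣ f s)
    (h : s * z ∈ (Ideal.comap f (Ideal.span {p})) ^ m) : p ^ m ∣ f z := by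
  have hle : (Ideal.comap f (Ideal.span {p})) ^ m ≤ Ideal.comap f (Ideal.span {p ^ m}) := by
    rw [← Ideal.span_singleton_pow, ← Ideal.map_le_iff_le_comap, Ideal.map_pow]
    exact Ideal.pow_right_mono Ideal.map_comap_le m
  have hdvd : p ^ m ∣ f s * f z := by
    simpa [Ideal.mem_span_singleton] using hle h
  exact hp.pow_dvd_of_dvd_mul_left m hs hdvd

theorem Polynomial.X_pow_dvd_map_iff {R S : Type*} [CommRing R] [CommRing S] (f : R →+* S)
    (hf : Function.Injective f) {p : R[X]} {j : ℕ} : X ^ j ∣ p.map f ↔ X ^ j ∣ p := by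
  simpa using map_dvd_map f hf (monic_X_pow j) (y := p)

namespace Aring

variable (k : Type) [Field k] (t : ℕ)

def x : Aring k t := Ideal.Quotient.mk (relId k t) (MvPolynomial.X 0)
def y : Aring k t := Ideal.Quotient.mk (relId k t) (MvPolynomial.X 1)
def u : Aring k t := Ideal.Quotient.mk (relId k t) (MvPolynomial.X 2)

theorem x_mul_y : x k t * y k t = u k t ^ t := by
  simp only [x, y, u, ← map_mul, ← map_pow]
  exact Ideal.Quotient.eq.mpr (Ideal.subset_span rfl)

theorem Iyu_eq_span : Iyu k t = Ideal.span {y k t, u k t} := rfl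

/-- `k[x][u] → A`, with `x` the inner and `u` the outer variable. -/
def evalXU : k[X][X] →+* Aring k t :=
  eval₂RingHom (eval₂RingHom (algebraMap k (Aring k t)) (x k t)) (u k t)

theorem exists_eq_y_mul_add_evalXU (z : Aring k t) : ∃ w r, z = y k t * w + evalXU k t r := by
  obtain ⟨P, rfl⟩ := Ideal.Quotient.mk_surjective z
  induction P using MvPolynomial.induction_on with
  | C a => exact ⟨0, C (C a), by simp [evalXU]; rfl⟩
  | add P Q hP hQ =>
    obtain ⟨w, r, hw⟩ := hP
    obtain ⟨w', r', hw'⟩ := hQ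
    exact ⟨w + w', r + r', by rw [map_add, hw, hw', map_add]; ring⟩
  | mul_X P i hP =>
    obtain ⟨w, r, hw⟩ := hP
    rw [map_mul, hw]
    fin_cases i
    · exact ⟨w * x k t, r * C X, by simp [evalXU, x]; ring⟩
    · exact ⟨w * y k t + evalXU k t r, 0, by simp [y]; ring⟩
    · exact ⟨w * u k t, r * X, by simp [evalXU, u]; ring⟩

theorem C_T_one_mul_C_T_neg_one : C (T 1 : k[T;T⁻¹]) * C (T (-1)) = 1 := by
  rw [← C_mul, ← LaurentPolynomial.T_add, add_neg_cancel, LaurentPolynomial.T_zero, C_1]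

/-- `φ : A → k[x,x⁻¹][u]`, with `T` standing for `x` and `X` for `u`. -/
def param : Aring k t →ₐ[k] k[T;T⁻¹][X] :=
  Ideal.Quotient.liftₐ (relId k t)
    (MvPolynomial.aeval ![C (T 1 : k[T;T⁻¹]), C (T (-1)) * X ^ t, X]) (by
      intro P hP
      obtain ⟨Q, rfl⟩ := Ideal.mem_span_singleton'.mp hP
      simp [← mul_assoc, C_T_one_mul_C_T_neg_one])

theorem param_mk (P : MvPolynomial (Fin 3) k) :
    param k t (Ideal.Quotient.mk (relId k t) P) =
      MvPolynomial.aeval ![C (T 1 : k[T;T⁻¹]), C (T (-1)) * X ^ t, X] P :=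
  Ideal.Quotient.lift_mk _ _ _

theorem param_x : param k t (x k t) = C (T 1) := by simp [x, param_mk]
theorem param_y : param k t (y k t) = C (T (-1)) * X ^ t := by simp [y, param_mk]
theorem param_u : param k t (u k t) = X := by simp [u, param_mk]

theorem param_evalXU (r : k[X][X]) : param k t (evalXU k t r) = r.map toLaurent := by
  have hcoeff : (param k t : Aring k t →+* k[T;T⁻¹][X]).comp
      (eval₂RingHom (algebraMap k (Aring k t)) (x k t)) = C.comp toLaurent := by
    ext a <;> simp [param_x]
  rw [evalXU, coe_eval₂RingHom, ← RingHom.coe_coe (param k t), hom_eval₂, hcoeff, RingHom.coe_coe,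
    param_u]
  rfl

theorem evalXU_X : evalXU k t X = u k t := eval₂_X _ _

theorem mem_span_y_u_pow_of_X_pow_dvd {j : ℕ} (hj : j ≤ t) {z : Aring k t}
    (h : X ^ j ∣ param k t z) : z ∈ Ideal.span {y k t, u k t ^ j} := by
  obtain ⟨w, r, rfl⟩ := exists_eq_y_mul_add_evalXU k t z
  have hy : X ^ j ∣ param k t (y k t * w) := by
    rw [map_mul, param_y]
    exact (dvd_mul_of_dvd_right (pow_dvd_pow X hj) _).mul_right _
  have hr : X ^ j ∣ r := by
    rw [← X_pow_dvd_map_iff toLaurent toLaurent_injective, ← param_evalXU]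
    exact (dvd_add_right hy).mp (by rwa [← map_add])
  obtain ⟨s, rfl⟩ := hr
  refine Ideal.add_mem _ (Ideal.mul_mem_right _ _ (Ideal.subset_span (Set.mem_insert _ _))) ?_
  rw [map_mul, map_pow, evalXU_X]
  exact Ideal.mul_mem_right _ _ (Ideal.subset_span (Set.mem_insert_of_mem _ rfl))

theorem Iyu_eq_comap_param (ht : 0 < t) : Iyu k t = (Ideal.span {X}).comap (param k t) := by
  refine le_antisymm ?_ fun z hz => ?_
  · rw [Iyu_eq_span, Ideal.span_le, Set.insert_subset_iff, Set.singleton_subset_iff]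
    simp only [SetLike.mem_coe, Ideal.mem_comap, Ideal.mem_span_singleton, param_y, param_u]
    exact ⟨(dvd_pow_self X ht.ne').mul_left _, dvd_rfl⟩
  · rw [Ideal.mem_comap, Ideal.mem_span_singleton, ← pow_one X] at hz
    simpa [Iyu_eq_span] using mem_span_y_u_pow_of_X_pow_dvd k t ht hz

theorem Iyu_isPrime (ht : 0 < t) : (Iyu k t).IsPrime := by
  have : (Ideal.span {(X : k[T;T⁻¹][X])}).IsPrime :=
    (Ideal.span_singleton_prime X_ne_zero).mpr prime_X
  rw [Iyu_eq_comap_param k t ht]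
  exact Ideal.IsPrime.comap _

theorem x_notMem_Iyu (ht : 0 < t) : x k t ∉ Iyu k t := by
  rw [Iyu_eq_comap_param k t ht, Ideal.mem_comap, param_x, Ideal.mem_span_singleton, X_dvd_iff,
    coeff_C_zero]
  exact (LaurentPolynomial.isUnit_T 1).ne_zero

theorem mem_span_y_pow_of_X_pow_dvd {n : ℕ} {z : Aring k t} (h : X ^ (t * n) ∣ param k t z) :
    z ∈ Ideal.span {y k t ^ n} := by
  induction n generalizing z with
  | zero => simp
  | succ n ih =>
    have hle : Ideal.span {y k t, u k t ^ t} ≤ Ideal.span {y k t} := by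
      rw [← x_mul_y, Ideal.span_le, Set.insert_subset_iff, Set.singleton_subset_iff]
      exact ⟨Ideal.subset_span rfl, Ideal.mul_mem_left _ _ (Ideal.subset_span rfl)⟩
    have hX : X ^ t ∣ param k t z := (pow_dvd_pow X (Nat.le_mul_of_pos_right t n.succ_pos)).trans h
    obtain ⟨w, rfl⟩ :=
      Ideal.mem_span_singleton'.mp (hle (mem_span_y_u_pow_of_X_pow_dvd k t le_rfl hX))
    rw [map_mul, param_y, mul_add, mul_one, pow_add, ← mul_assoc,
      mul_dvd_mul_iff_right (pow_ne_zero _ X_ne_zero),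
      (isUnit_C.mpr (LaurentPolynomial.isUnit_T _)).dvd_mul_right] at h
    have hw := ih h
    rw [Ideal.mem_span_singleton] at hw
    rw [Ideal.mem_span_singleton, pow_succ]
    exact mul_dvd_mul_right hw _

end Aring

open Aring in
theorem symbolic_power_eq_general (k : Type) [Field k] (t n : ℕ) (ht : 0 < t) :
    ∃ hI : (Iyu k t).IsPrime,
      Ideal.comap (algebraMap (Aring k t) (Localization (@Ideal.primeCompl _ _ (Iyu k t) hI)))
          ((Ideal.map (algebraMap (Aring k t)
              (Localization (@Ideal.primeCompl _ _ (Iyu k t) hI))) (Iyu k t)) ^ (t * n))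
        = Ideal.span {Ideal.Quotient.mk (relId k t) (MvPolynomial.X 1) ^ n} := by
  have hI := Iyu_isPrime k t ht
  refine ⟨hI, Ideal.ext fun z => ?_⟩
  rw [← Ideal.map_pow (S := Localization (Iyu k t).primeCompl), Ideal.mem_comap,
    IsLocalization.algebraMap_mem_map_algebraMap_iff (Iyu k t).primeCompl
      (S := Localization (Iyu k t).primeCompl)]
  change _ ↔ z ∈ Ideal.span {y k t ^ n}
  constructor
  · rintro ⟨s, hs : s ∉ Iyu k t, hsz⟩
    rw [Iyu_eq_comap_param k t ht] at hs hsz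
    refine mem_span_y_pow_of_X_pow_dvd k t (prime_X.pow_dvd_of_mul_mem_pow_comap_span _ ?_ hsz)
    simpa [Ideal.mem_span_singleton] using hs
  · intro hz
    obtain ⟨w, rfl⟩ := Ideal.mem_span_singleton'.mp hz
    refine ⟨x k t ^ n, fun hx => x_notMem_Iyu k t ht (hI.mem_of_pow_mem n hx), ?_⟩
    have hu : u k t ∈ Iyu k t := Ideal.subset_span (Set.mem_insert_of_mem _ rfl)
    rw [show x k t ^ n * (w * y k t ^ n) = w * u k t ^ (t * n) by rw [pow_mul, ← x_mul_y]; ring]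
    exact Ideal.mul_mem_left _ _ (Ideal.pow_mem_pow hu _)

/-- Proposition 4.5 (Prop. `prop:symbol`): in `A = k[x,y,u]/⟨x y − u^t⟩`, the ideal
`I = ⟨y, u⟩` is prime, and for `m = t·n` its `m`-th symbolic power (the preimage of
`(I A_I)^m` under the localization map `A → A_I`) equals `⟨y^n⟩`. -/
theorem symbolic_power_eq (k : Type) [Field k] (t n : ℕ) (ht : 0 < t) (hn : 0 < n) :
    ∃ hI : (Iyu k t).IsPrime,
      Ideal.comap (algebraMap (Aring k t) (Localization (@Ideal.primeCompl _ _ (Iyu k t) hI)))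
          ((Ideal.map (algebraMap (Aring k t)
              (Localization (@Ideal.primeCompl _ _ (Iyu k t) hI))) (Iyu k t)) ^ (t * n))
        = Ideal.span {Ideal.Quotient.mk (relId k t) (MvPolynomial.X 1) ^ n} :=
  symbolic_power_eq_general k t n ht

end
end
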